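/- arXiv:2512.20262 — 3 statements merged into one kernel-verified Lean document; each statement's English description precedes it below -/
import Mathlib

section
/- Let f = a_0 + a_1 z + ... + a_n z^n ∈ ℤ[z] be a primitive polynomial of degree n with a_0·a_n ≠ 0. Suppose there exists a positive integer m with m ≥ h_f + 2 such that |f(m)| = p_1^{k_1}···p_r^{k_r}, where p_1,…,p_r are primes which are pairwise distinct if r ≥ 2 and k_1,…,k_r are positive integers. Suppose that for each i = 1,…,r there exists a positive integer j_i ≤ n such that: (i) v_{p_i}(s_{j_i}(m)) = 0 and gcd(k_i, j_i) = 1; and (ii) if j_i > 1, then k_i/j_i < v_{p_i}(s_t(m))/(j_i − t) for each t = 1,…,j_i − 1. Then f is a product of at most r irreducible polynomials in ℤ[z]; in particular, if r = 1, then f is irreducible in ℤ[z]. -/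
/-!
Write `F(X) = f(X + m) = ∑ s_t(m) X^t` and fix `p = p_i`, `k = k_i`, `j = j_i`. The Gauss norm
`‖·‖` for `|·|_p` at radius `c = p^(-k/j)` is multiplicative, and the hypotheses say that the
points `(t, v_p(s_t(m)))` lie on or above the segment from `(0, k)` to `(j, 0)`, that is,
`‖F‖ ≤ c^j = |f(m)|_p`. If `f = g h`, then `‖G‖ ‖H‖ = ‖F‖`, where `‖G‖ ≥ |g(m)|_p` and
`‖H‖ ≥ |h(m)|_p`; since `p ∤ s_j(m)`, there are `p`-adic units `G_u`, `H_w` with `u + w = j`,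
so also `‖G‖ ≥ c^u` and `‖H‖ ≥ c^w`. All these bounds are therefore equalities, and
`|g(m)|_p = c^u` with `gcd(k, j) = 1` forces `u ∈ {0, j}`: `p` divides at most one of `g(m)`,
`h(m)`.

By Cauchy's bound every complex root of `f` has modulus `< h_f + 1 ≤ m - 1`, so every
nonconstant factor `g` of `f` has `|g(m)| > 1` and is divisible by some `p_i`. By the above,
each `p_i` divides `g(m)` for at most one irreducible factor `g` of `f` (counted with
multiplicity), so there are at most `r` of them.
-/

/-- The height `h_f = max_{0 ≤ i ≤ n-1} |a_i|/|a_n|` of a polynomial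
`f = a_0 + a_1 z + ⋯ + a_n z^n` of degree `n`. -/
noncomputable def height (f : Polynomial ℤ) : ℝ :=
  ⨆ i : Fin f.natDegree, (|f.coeff i| : ℝ) / |f.coeff f.natDegree|

open Polynomial UniqueFactorizationMonoid

noncomputable def padicAbv (p : ℕ) [Fact p.Prime] : AbsoluteValue ℤ ℝ :=
  (Rat.AbsoluteValue.padic p).comp (Int.castRingHom ℚ).injective_int

section PadicAbv

variable {p : ℕ} [Fact p.Prime]

lemma padicAbv_apply (a : ℤ) : padicAbv p a = padicNorm p a := rfl

lemma isNonarchimedean_padicAbv : IsNonarchimedean (padicAbv p) := fun a b => by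
  simpa [padicAbv_apply] using padicNorm.nonarchimedean (p := p) (q := a) (r := b)

lemma padicAbv_le_one (a : ℤ) : padicAbv p a ≤ 1 := by
  rw [padicAbv_apply]
  exact_mod_cast padicNorm.of_int a

lemma padicAbv_eq_one_iff {a : ℤ} : padicAbv p a = 1 ↔ ¬ (p : ℤ) ∣ a := by
  rw [← padicNorm.int_eq_one_iff, padicAbv_apply]
  norm_cast

lemma padicAbv_eq_rpow {a : ℤ} (ha : a ≠ 0) :
    padicAbv p a = (p : ℝ) ^ (-(padicValInt p a : ℝ)) := by
  rw [padicAbv_apply, padicNorm.eq_zpow_of_nonzero (by exact_mod_cast ha), padicValRat.of_int]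
  push_cast
  rw [← Real.rpow_intCast]
  push_cast
  rfl

end PadicAbv

lemma eq_and_eq_of_mul_le_mul {a b x y : ℝ} (ha : 0 < a) (hb : 0 < b) (hax : a ≤ x)
    (hby : b ≤ y) (h : x * y ≤ a * b) : x = a ∧ y = b := by
  constructor <;> nlinarith

lemma Polynomial.exists_not_dvd_coeff_of_not_dvd_coeff_mul {R : Type*} [CommSemiring R]
    {a : R} {G H : R[X]} {j : ℕ} (h : ¬ a ∣ (G * H).coeff j) :
    ∃ u w, u + w = j ∧ ¬ a ∣ G.coeff u ∧ ¬ a ∣ H.coeff w := by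
  rw [coeff_mul] at h
  obtain ⟨⟨u, w⟩, huw, hndvd⟩ := not_forall₂.mp (mt Finset.dvd_sum h)
  exact ⟨u, w, Finset.HasAntidiagonal.mem_antidiagonal.mp huw,
    fun hu => hndvd (hu.mul_right _), fun hw => hndvd (hw.mul_left _)⟩

section NewtonSegment

/-- At this radius the Gauss-norm term `|a_t|_p c^t` is `p^(-(v_p(a_t) + k t / j))`, so it is
largest along the Newton segment from `(0, k)` to `(j, 0)`. -/
noncomputable def slopeRadius (p k j : ℕ) : ℝ := (p : ℝ) ^ (-(k / j : ℝ))

variable {p k j : ℕ}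

lemma slopeRadius_pow (t : ℕ) : slopeRadius p k j ^ t = (p : ℝ) ^ (-(k * t / j : ℝ)) := by
  rw [slopeRadius, ← Real.rpow_natCast, ← Real.rpow_mul (Nat.cast_nonneg p)]
  ring_nf

lemma slopeRadius_pow_self (hj : 0 < j) : slopeRadius p k j ^ j = (p : ℝ) ^ (-(k : ℝ)) := by
  rw [slopeRadius_pow, mul_div_cancel_right₀ _ (by positivity)]

variable [hp : Fact p.Prime]

lemma one_lt_prime_cast : (1 : ℝ) < p := by exact_mod_cast hp.out.one_lt

lemma slopeRadius_pos : 0 < slopeRadius p k j :=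
  Real.rpow_pos_of_pos (zero_lt_one.trans one_lt_prime_cast) _

lemma slopeRadius_le_one : slopeRadius p k j ≤ 1 :=
  Real.rpow_le_one_of_one_le_of_nonpos one_lt_prime_cast.le
    (neg_nonpos.mpr (by positivity))

lemma padicAbv_ne_slopeRadius_pow {a : ℤ} (ha : a ≠ 0) (hkj : k.Coprime j) {u : ℕ}
    (hu : 0 < u) (huj : u < j) : padicAbv p a ≠ slopeRadius p k j ^ u := by
  rw [padicAbv_eq_rpow ha, slopeRadius_pow, Ne,
    Real.rpow_right_inj (zero_lt_one.trans one_lt_prime_cast) one_lt_prime_cast.ne', neg_inj,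
    eq_div_iff (by exact_mod_cast (by omega : j ≠ 0))]
  intro h
  have hdvd : j ∣ k * u :=
    ⟨padicValInt p a, by exact_mod_cast (by linarith : (k * u : ℝ) = j * padicValInt p a)⟩
  exact absurd (Nat.le_of_dvd hu (hkj.symm.dvd_of_dvd_mul_left hdvd)) (by omega)

lemma gaussNorm_le_slopeRadius_pow {F : ℤ[X]} (hj : 0 < j)
    (hF0 : padicValInt p (F.coeff 0) = k)
    (hmid : ∀ t, 0 < t → t < j →
      F.coeff t = 0 ∨ k * (j - t) ≤ j * padicValInt p (F.coeff t)) :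
    F.gaussNorm (padicAbv p) (slopeRadius p k j) ≤ slopeRadius p k j ^ j := by
  obtain ⟨t, ht⟩ := F.exists_eq_gaussNorm (padicAbv p) (slopeRadius p k j)
  rw [ht]
  rcases eq_or_ne (F.coeff t) 0 with h0 | h0
  · rw [h0, map_zero, zero_mul]
    exact (pow_pos slopeRadius_pos j).le
  rcases le_or_gt j t with hjt | htj
  · calc padicAbv p (F.coeff t) * slopeRadius p k j ^ t ≤ 1 * slopeRadius p k j ^ j :=
          mul_le_mul (padicAbv_le_one _)
            (pow_le_pow_of_le_one slopeRadius_pos.le slopeRadius_le_one hjt)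
            (pow_pos slopeRadius_pos t).le zero_le_one
      _ = slopeRadius p k j ^ j := one_mul _
  have hkey : k * (j - t) ≤ j * padicValInt p (F.coeff t) := by
    rcases Nat.eq_zero_or_pos t with rfl | ht0
    · rw [hF0, Nat.sub_zero, mul_comm]
    · exact (hmid t ht0 htj).resolve_left h0
  have hkey' := (Nat.cast_le (α := ℝ)).mpr hkey
  push_cast [Nat.cast_sub htj.le] at hkey'
  have hj' : (0 : ℝ) < j := by exact_mod_cast hj
  have : (k : ℝ) - padicValInt p (F.coeff t) ≤ k * t / j := by
    rw [le_div_iff₀ hj']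
    linarith
  rw [padicAbv_eq_rpow h0, slopeRadius_pow, slopeRadius_pow,
    ← Real.rpow_add (zero_lt_one.trans one_lt_prime_cast),
    Real.rpow_le_rpow_left_iff one_lt_prime_cast, mul_div_cancel_right₀ _ hj'.ne']
  linarith

theorem not_dvd_coeff_zero_or_not_dvd_coeff_zero_of_eq_mul {F G H : ℤ[X]} (hFGH : F = G * H)
    (hk : 0 < k) (hj : 0 < j) (hkj : k.Coprime j)
    (hF0 : padicValInt p (F.coeff 0) = k) (hFj : ¬ (p : ℤ) ∣ F.coeff j)
    (hmid : ∀ t, 0 < t → t < j →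
      F.coeff t = 0 ∨ k * (j - t) ≤ j * padicValInt p (F.coeff t)) :
    ¬ (p : ℤ) ∣ G.coeff 0 ∨ ¬ (p : ℤ) ∣ H.coeff 0 := by
  set c := slopeRadius p k j
  set v := padicAbv p
  have hc : 0 < c := slopeRadius_pos
  have hN : G.gaussNorm v c * H.gaussNorm v c ≤ c ^ j := by
    rw [← gaussNorm_mul isNonarchimedean_padicAbv hc, ← hFGH]
    exact gaussNorm_le_slopeRadius_pow hj hF0 hmid
  have hF0ne : F.coeff 0 ≠ 0 := fun h => by simp [h] at hF0; omega
  have hGH0 : F.coeff 0 = G.coeff 0 * H.coeff 0 := by rw [hFGH, mul_coeff_zero]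
  have hG0ne : G.coeff 0 ≠ 0 := left_ne_zero_of_mul (hGH0 ▸ hF0ne)
  have hH0ne : H.coeff 0 ≠ 0 := right_ne_zero_of_mul (hGH0 ▸ hF0ne)
  have hvF0 : v (G.coeff 0) * v (H.coeff 0) = c ^ j := by
    rw [← map_mul, ← hGH0, padicAbv_eq_rpow hF0ne, hF0, slopeRadius_pow_self hj]
  obtain ⟨u, w, huw, hGu, hHw⟩ := exists_not_dvd_coeff_of_not_dvd_coeff_mul (hFGH ▸ hFj)
  have hcoeff (P : ℤ[X]) (i : ℕ) : v (P.coeff i) * c ^ i ≤ P.gaussNorm v c :=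
    P.le_gaussNorm v hc.le i
  have hconst := eq_and_eq_of_mul_le_mul (v.pos hG0ne) (v.pos hH0ne)
    (by simpa using hcoeff G 0) (by simpa using hcoeff H 0) (hN.trans hvF0.ge)
  have hunit := eq_and_eq_of_mul_le_mul (x := G.gaussNorm v c) (y := H.gaussNorm v c)
    (pow_pos hc u) (pow_pos hc w)
    (by simpa [v, padicAbv_eq_one_iff.mpr hGu] using hcoeff G u)
    (by simpa [v, padicAbv_eq_one_iff.mpr hHw] using hcoeff H w)
    (by rwa [← pow_add, huw])
  have hG : v (G.coeff 0) = c ^ u := hconst.1.symm.trans hunit.1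
  have hH : v (H.coeff 0) = c ^ w := hconst.2.symm.trans hunit.2
  rcases Nat.eq_zero_or_pos u with rfl | hu
  · exact Or.inl (padicAbv_eq_one_iff.mp (by rw [hG, pow_zero]))
  rcases Nat.eq_zero_or_pos w with rfl | hw
  · exact Or.inr (padicAbv_eq_one_iff.mp (by rw [hH, pow_zero]))
  exact absurd hG (padicAbv_ne_slopeRadius_pow hG0ne hkj hu (by omega))

theorem not_dvd_eval_or_not_dvd_eval_of_eq_mul {f g h : ℤ[X]} (hfgh : f = g * h) (m : ℤ)
    (hk : 0 < k) (hj : 0 < j) (hkj : k.Coprime j)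
    (hf : padicValInt p (f.eval m) = k) (hfj : ¬ (p : ℤ) ∣ (hasseDeriv j f).eval m)
    (hmid : ∀ t, 0 < t → t < j → (hasseDeriv t f).eval m = 0 ∨
      k * (j - t) ≤ j * padicValInt p ((hasseDeriv t f).eval m)) :
    ¬ (p : ℤ) ∣ g.eval m ∨ ¬ (p : ℤ) ∣ h.eval m := by
  simpa only [taylor_coeff_zero] using
    not_dvd_coeff_zero_or_not_dvd_coeff_zero_of_eq_mul (F := taylor m f) (G := taylor m g)
      (H := taylor m h) (by rw [hfgh, taylor_mul]) hk hj hkj (by rwa [taylor_coeff_zero])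
      (by rwa [taylor_coeff]) (by simpa only [taylor_coeff] using hmid)

end NewtonSegment

lemma mul_sub_le_of_div_lt_div {k j t v : ℕ} (htj : t < j)
    (h : (k : ℚ) / j < v / (j - t)) : k * (j - t) ≤ j * v := by
  have hjt : (0 : ℚ) < j - t := sub_pos.mpr (by exact_mod_cast htj)
  rw [div_lt_div_iff₀ (by exact_mod_cast (Nat.zero_le t).trans_lt htj) hjt] at h
  have : ((k * (j - t) : ℕ) : ℚ) < ((j * v : ℕ) : ℚ) := by
    push_cast [Nat.cast_sub htj.le]
    linarith
  exact_mod_cast this.le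

lemma abs_coeff_div_le_height (f : ℤ[X]) {i : ℕ} (hi : i < f.natDegree) :
    |(f.coeff i : ℝ)| / |(f.leadingCoeff : ℝ)| ≤ height f := by
  have := le_ciSup (f := fun i : Fin f.natDegree => (|f.coeff i| : ℝ) / |f.coeff f.natDegree|)
    (Finite.bddAbove_range _) ⟨i, hi⟩
  rw [leadingCoeff]
  simpa only [Int.cast_abs, height] using this

lemma height_nonneg (f : ℤ[X]) : 0 ≤ height f :=
  Real.iSup_nonneg fun _ => by positivity

lemma norm_lt_height_add_one {f : ℤ[X]} (hf : f ≠ 0) {z : ℂ}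
    (hz : (f.map (Int.castRingHom ℂ)).IsRoot z) : ‖z‖ < height f + 1 := by
  have hinj := RingHom.injective_int (Int.castRingHom ℂ)
  have hF := hz.norm_lt_cauchyBound ((Polynomial.map_ne_zero_iff hinj).mpr hf)
  rw [← NNReal.coe_lt_coe, coe_nnnorm] at hF
  refine hF.trans_le ?_
  have hlc : 0 < |(f.leadingCoeff : ℝ)| := by
    simpa using leadingCoeff_ne_zero.mpr hf
  have hB : 0 ≤ height f * |(f.leadingCoeff : ℝ)| := mul_nonneg (height_nonneg f) hlc.le
  have hsup : (Finset.range f.natDegree).sup (fun i => ‖(f.map (Int.castRingHom ℂ)).coeff i‖₊)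
      ≤ (height f * |(f.leadingCoeff : ℝ)|).toNNReal := by
    refine Finset.sup_le fun i hi => (Real.le_toNNReal_iff_coe_le hB).mpr ?_
    have := abs_coeff_div_le_height f (Finset.mem_range.mp hi)
    rw [div_le_iff₀ hlc] at this
    simpa [Int.norm_eq_abs] using this
  have := NNReal.coe_le_coe.mpr hsup
  rw [Real.coe_toNNReal _ hB] at this
  rw [cauchyBound, NNReal.coe_add, NNReal.coe_one, add_le_add_iff_right, NNReal.coe_div,
    leadingCoeff_map_of_injective hinj, natDegree_map_eq_of_injective hinj, coe_nnnorm,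
    div_le_iff₀ (by simpa [Int.norm_eq_abs] using hlc)]
  simpa [Int.norm_eq_abs] using this

lemma one_lt_norm_eval_of_forall_mem_roots {g : ℂ[X]} (hg : 0 < g.natDegree)
    (hlc : 1 ≤ ‖g.leadingCoeff‖) {x : ℂ} (h : ∀ z ∈ g.roots, 1 < ‖x - z‖) :
    1 < ‖g.eval x‖ := by
  obtain ⟨z₀, hz₀⟩ := IsAlgClosed.exists_root g (natDegree_pos_iff_degree_pos.mp hg).ne'
  obtain ⟨s, hs⟩ :=
    Multiset.exists_cons_of_mem ((mem_roots (ne_zero_of_natDegree_gt hg)).mpr hz₀)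
  have h₀ : 1 < ‖x - z₀‖ := h z₀ (hs ▸ Multiset.mem_cons_self _ _)
  have hs₁ : 1 ≤ ‖(s.map (x - ·)).prod‖ := by
    rw [show ‖(s.map (x - ·)).prod‖ = normHom (s.map (x - ·)).prod from rfl,
      map_multiset_prod, Multiset.map_map]
    exact Multiset.one_le_prod_map fun z hz => (h z (hs ▸ Multiset.mem_cons_of_mem hz)).le
  rw [(IsAlgClosed.splits g).eval_eq_prod_roots, hs, Multiset.map_cons, Multiset.prod_cons,
    norm_mul, norm_mul]
  calc (1 : ℝ) < 1 * (‖x - z₀‖ * 1) := by simpa using h₀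
    _ ≤ _ := by gcongr

lemma one_lt_natAbs_eval_of_dvd {f g : ℤ[X]} (hf : f ≠ 0) (hgf : g ∣ f)
    (hg : 0 < g.natDegree) {m : ℤ} (hm : height f + 2 ≤ m) : 1 < (g.eval m).natAbs := by
  have hinj := RingHom.injective_int (Int.castRingHom ℂ)
  have hG0 : g.map (Int.castRingHom ℂ) ≠ 0 :=
    (Polynomial.map_ne_zero_iff hinj).mpr (ne_zero_of_natDegree_gt hg)
  have key : 1 < ‖(g.map (Int.castRingHom ℂ)).eval (m : ℂ)‖ := by
    refine one_lt_norm_eval_of_forall_mem_roots (by rwa [natDegree_map_eq_of_injective hinj])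
      ?_ fun z hz => ?_
    · rw [leadingCoeff_map_of_injective hinj, eq_intCast, Complex.norm_intCast, ← Int.cast_abs]
      exact_mod_cast Int.one_le_abs (leadingCoeff_ne_zero.mpr (ne_zero_of_natDegree_gt hg))
    · have hz' := norm_lt_height_add_one hf
        (((mem_roots hG0).mp hz).dvd (Polynomial.map_dvd _ hgf))
      have := norm_sub_norm_le (m : ℂ) z
      have : (m : ℝ) ≤ ‖(m : ℂ)‖ := by rw [Complex.norm_intCast]; exact le_abs_self _
      linarith
  rw [eval_intCast_map, eq_intCast, Complex.norm_intCast, ← Int.cast_abs] at key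
  have : (1 : ℤ) < |g.eval m| := by exact_mod_cast key
  rw [Int.abs_eq_natAbs] at this
  exact_mod_cast this

lemma Int.padicValInt_eq_of_natAbs_eq_prod {a : ℤ} {s : Finset ℕ} {p : ℕ → ℕ} (k : ℕ → ℕ)
    (hp : ∀ i ∈ s, (p i).Prime) (hinj : Set.InjOn p s) (ha : a.natAbs = ∏ i ∈ s, p i ^ k i)
    {i : ℕ} (hi : i ∈ s) : padicValInt (p i) a = k i := by
  rw [padicValInt, ha, ← Nat.factorization_def _ (hp i hi),
    Nat.factorization_prod fun i' hi' => pow_ne_zero _ (hp i' hi').ne_zero, Finset.sum_apply',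
    Finset.sum_eq_single i]
  · simp [(hp i hi).factorization_pow]
  · intro i' hi' hne
    rw [(hp i' hi').factorization_pow, Finsupp.single_apply, if_neg fun h => hne (hinj hi' hi h)]
  · exact fun h => absurd hi h

lemma Int.exists_prime_dvd_of_dvd_of_natAbs_eq_prod {a b : ℤ} {s : Finset ℕ} {p : ℕ → ℕ}
    (k : ℕ → ℕ) (hp : ∀ i ∈ s, (p i).Prime) (hb : b.natAbs = ∏ i ∈ s, p i ^ k i) (hab : a ∣ b)
    (ha : a.natAbs ≠ 1) : ∃ i ∈ s, (p i : ℤ) ∣ a := by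
  obtain ⟨q, hq, hqa⟩ := Nat.exists_prime_and_dvd ha
  obtain ⟨i, hi, hqi⟩ := (Prime.dvd_finsetProd_iff hq.prime _).mp
    (hb ▸ hqa.trans (Int.natAbs_dvd_natAbs.mpr hab))
  obtain rfl := (Nat.prime_dvd_prime_iff_eq hq (hp i hi)).mp (hq.dvd_of_dvd_pow hqi)
  exact ⟨i, hi, Int.natCast_dvd.mpr hqa⟩

lemma Multiset.card_le_sum_countP {ι α : Type*} (t : Finset ι) (P : ι → α → Prop)
    [∀ i, DecidablePred (P i)] {s : Multiset α} (h : ∀ a ∈ s, ∃ i ∈ t, P i a) :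
    card s ≤ ∑ i ∈ t, s.countP (P i) := by
  induction s using Multiset.induction with
  | empty => simp
  | cons a s ih =>
    obtain ⟨i, hi, hPi⟩ := h a (mem_cons_self a s)
    simp only [countP_cons, Finset.sum_add_distrib, card_cons]
    gcongr
    · exact ih fun b hb => h b (mem_cons_of_mem hb)
    · exact (if_pos hPi).symm.le.trans
        (Finset.single_le_sum (f := fun j => if P j a then 1 else 0) (fun _ _ => Nat.zero_le _) hi)

section Factors

variable {α ι : Type*} [CommMonoidWithZero α] [UniqueFactorizationMonoid α]

theorem UniqueFactorizationMonoid.card_factors_le {a : α} (ha : a ≠ 0) (t : Finset ι)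
    (P : ι → α → Prop) (hP : ∀ i b c, P i b → b ∣ c → P i c)
    (hcover : ∀ b ∈ factors a, ∃ i ∈ t, P i b)
    (hsep : ∀ i ∈ t, ∀ b c, a = b * c → ¬ (P i b ∧ P i c)) :
    Multiset.card (factors a) ≤ t.card := by
  classical
  have hcount : ∀ i ∈ t, (factors a).countP (P i) ≤ 1 := by
    intro i hi
    by_contra! h
    obtain ⟨b, hb, hPb⟩ := Multiset.countP_pos.mp (zero_lt_one.trans h)
    obtain ⟨s, hs⟩ := Multiset.exists_cons_of_mem hb
    rw [hs, Multiset.countP_cons_of_pos _ hPb] at h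
    obtain ⟨b', hb', hPb'⟩ := Multiset.countP_pos.mp (by omega : 0 < s.countP (P i))
    obtain ⟨s', rfl⟩ := Multiset.exists_cons_of_mem hb'
    obtain ⟨w, hw⟩ := factors_prod ha
    refine hsep i hi b (b' * (s'.prod * w)) ?_ ⟨hPb, hP i b' _ hPb' (dvd_mul_right _ _)⟩
    rw [← hw, hs, Multiset.prod_cons, Multiset.prod_cons, mul_assoc, mul_assoc]
  calc Multiset.card (factors a) ≤ ∑ i ∈ t, (factors a).countP (P i) :=
        Multiset.card_le_sum_countP t P hcover
    _ ≤ ∑ _i ∈ t, 1 := Finset.sum_le_sum hcount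
    _ = t.card := by simp

theorem UniqueFactorizationMonoid.irreducible_of_card_factors_le_one {a : α} (ha : a ≠ 0)
    (hu : ¬ IsUnit a) (h : Multiset.card (factors a) ≤ 1) : Irreducible a := by
  obtain ⟨b, hb⟩ := Multiset.card_eq_one.mp (le_antisymm h
    (Multiset.card_pos.mpr ((factors_pos ha).mpr hu).ne'))
  have hab := factors_prod ha
  rw [hb, Multiset.prod_singleton] at hab
  exact hab.irreducible (irreducible_of_factor b (hb ▸ Multiset.mem_singleton_self b))

end Factors

lemma Polynomial.exists_eq_C_mul_prod_factors {R : Type*} [CommRing R] [IsDomain R]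
    [UniqueFactorizationMonoid R[X]] {f : R[X]} (hf : f ≠ 0) :
    ∃ u : Rˣ, f = C (u : R) * (factors f).prod := by
  obtain ⟨w, hw⟩ := factors_prod hf
  obtain ⟨c, hc, hcw⟩ := Polynomial.isUnit_iff.mp w.isUnit
  exact ⟨hc.unit, by rw [IsUnit.unit_spec, hcw, mul_comm, hw]⟩

lemma Polynomial.IsPrimitive.natDegree_pos_of_mem_factors {f g : ℤ[X]} (hf : f.IsPrimitive)
    (hg : g ∈ factors f) : 0 < g.natDegree := by
  by_contra! h
  obtain ⟨c, rfl⟩ := natDegree_eq_zero.mp (Nat.le_zero.mp h)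
  exact (irreducible_of_factor _ hg).not_isUnit (isUnit_C.mpr (hf c (dvd_of_mem_factors hg)))
theorem statement0_general
    (f : Polynomial ℤ) (n : ℕ)
    (hprim : f.IsPrimitive)
    (m : ℕ) (hmh : height f + 2 ≤ (m : ℝ))
    (r : ℕ)
    (p k j : ℕ → ℕ)
    (hp : ∀ i < r, Nat.Prime (p i))
    (hk : ∀ i < r, 0 < k i)
    (hpdist : ∀ i < r, ∀ i' < r, i ≠ i' → p i ≠ p i')
    (hfm : (f.eval (m : ℤ)).natAbs = ∏ i ∈ Finset.range r, p i ^ k i)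
    (hj : ∀ i < r, 0 < j i ∧ j i ≤ n)
    (hcond1 : ∀ i < r,
      ¬ ((p i : ℤ) ∣ (Polynomial.hasseDeriv (j i) f).eval (m : ℤ)) ∧
      Nat.gcd (k i) (j i) = 1)
    (hcond2 : ∀ i < r, 1 < j i → ∀ t, 1 ≤ t → t ≤ j i - 1 →
      (Polynomial.hasseDeriv t f).eval (m : ℤ) = 0 ∨
      (k i : ℚ) / (j i : ℚ) <
        (padicValInt (p i) ((Polynomial.hasseDeriv t f).eval (m : ℤ)) : ℚ) /
          ((j i : ℚ) - (t : ℚ))) :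
    (∃ (N : ℕ) (u : ℤˣ) (gs : Multiset (Polynomial ℤ)),
      N ≤ r ∧ Multiset.card gs = N ∧
      (∀ g ∈ gs, 0 < g.natDegree ∧ Irreducible g) ∧
      f = Polynomial.C (u : ℤ) * gs.prod) ∧
    (r = 1 → Irreducible f) := by
  have hf0 : f ≠ 0 := hprim.ne_zero
  have hp' : ∀ i ∈ Finset.range r, (p i).Prime := fun i hi => hp i (Finset.mem_range.mp hi)
  have hsep : ∀ i ∈ Finset.range r, ∀ g h : ℤ[X], f = g * h →
      ¬ ((p i : ℤ) ∣ g.eval (m : ℤ) ∧ (p i : ℤ) ∣ h.eval (m : ℤ)) := by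
    intro i hi g h hfgh
    have : Fact (p i).Prime := ⟨hp' i hi⟩
    have hval : padicValInt (p i) (f.eval (m : ℤ)) = k i :=
      Int.padicValInt_eq_of_natAbs_eq_prod k hp' (fun a ha b hb => not_imp_not.mp
        (hpdist a (Finset.mem_range.mp ha) b (Finset.mem_range.mp hb))) hfm hi
    rw [Finset.mem_range] at hi
    rw [not_and_or]
    exact not_dvd_eval_or_not_dvd_eval_of_eq_mul hfgh m (hk i hi) (hj i hi).1
      (Nat.coprime_iff_gcd_eq_one.mpr (hcond1 i hi).2) hval (hcond1 i hi).1
      fun t ht htj => (hcond2 i hi (by omega) t ht (by omega)).imp_right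
        (mul_sub_le_of_div_lt_div htj)
  have hcover : ∀ g ∈ factors f, ∃ i ∈ Finset.range r, (p i : ℤ) ∣ g.eval (m : ℤ) :=
    fun g hg => Int.exists_prime_dvd_of_dvd_of_natAbs_eq_prod k hp' hfm
      (eval_dvd (dvd_of_mem_factors hg)) (one_lt_natAbs_eval_of_dvd hf0 (dvd_of_mem_factors hg)
        (hprim.natDegree_pos_of_mem_factors hg) (by simpa using hmh)).ne'
  have hcard := card_factors_le hf0 (Finset.range r) (fun i g => (p i : ℤ) ∣ g.eval (m : ℤ))
    (fun i g h hg hgh => hg.trans (eval_dvd hgh)) hcover hsep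
  rw [Finset.card_range] at hcard
  obtain ⟨u, hu⟩ := exists_eq_C_mul_prod_factors hf0
  refine ⟨⟨_, u, factors f, hcard, rfl, fun g hg =>
    ⟨hprim.natDegree_pos_of_mem_factors hg, irreducible_of_factor g hg⟩, hu⟩, fun hr1 => ?_⟩
  subst hr1
  refine irreducible_of_card_factors_le_one hf0 (fun hunit => ?_) hcard
  have h1 : (f.eval (m : ℤ)).natAbs = 1 :=
    Int.isUnit_iff_natAbs_eq.mp (hunit.map (evalRingHom (m : ℤ)))
  rw [hfm, Finset.prod_range_one] at h1
  exact (Nat.one_lt_pow (hk 0 one_pos).ne' (hp 0 one_pos).one_lt).ne' h1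

/-- Theorem 1: if `f` is primitive of degree `n`, `a_0 a_n ≠ 0`, `m ≥ h_f + 2` is a
positive integer with `|f(m)| = p_1^{k_1} ⋯ p_r^{k_r}` for pairwise distinct primes
`p_i`, and for each `i` there is `1 ≤ j_i ≤ n` with `v_{p_i}(s_{j_i}(m)) = 0`,
`gcd(k_i, j_i) = 1`, and (if `j_i > 1`) `k_i/j_i < v_{p_i}(s_t(m))/(j_i - t)` for
`t = 1, …, j_i - 1` (where `s_t = f^{(t)}/t!` and `v_p(0) = ∞`), then `f` is a product
of at most `r` irreducible polynomials in `ℤ[z]`; in particular if `r = 1` then `f`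
is irreducible. -/
theorem statement0
    (f : Polynomial ℤ) (n : ℕ) (hdeg : f.natDegree = n)
    (ha : f.coeff 0 * f.coeff n ≠ 0) (hprim : f.IsPrimitive)
    (m : ℕ) (hm : 0 < m) (hmh : height f + 2 ≤ (m : ℝ))
    (r : ℕ) (hr : 0 < r)
    (p k j : ℕ → ℕ)
    (hp : ∀ i < r, Nat.Prime (p i))
    (hk : ∀ i < r, 0 < k i)
    (hpdist : ∀ i < r, ∀ i' < r, i ≠ i' → p i ≠ p i')
    (hfm : (f.eval (m : ℤ)).natAbs = ∏ i ∈ Finset.range r, p i ^ k i)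
    (hj : ∀ i < r, 0 < j i ∧ j i ≤ n)
    (hcond1 : ∀ i < r,
      ¬ ((p i : ℤ) ∣ (Polynomial.hasseDeriv (j i) f).eval (m : ℤ)) ∧
      Nat.gcd (k i) (j i) = 1)
    (hcond2 : ∀ i < r, 1 < j i → ∀ t, 1 ≤ t → t ≤ j i - 1 →
      (Polynomial.hasseDeriv t f).eval (m : ℤ) = 0 ∨
      (k i : ℚ) / (j i : ℚ) <
        (padicValInt (p i) ((Polynomial.hasseDeriv t f).eval (m : ℤ)) : ℚ) /
          ((j i : ℚ) - (t : ℚ))) :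
    (∃ (N : ℕ) (u : ℤˣ) (gs : Multiset (Polynomial ℤ)),
      N ≤ r ∧ Multiset.card gs = N ∧
      (∀ g ∈ gs, 0 < g.natDegree ∧ Irreducible g) ∧
      f = Polynomial.C (u : ℤ) * gs.prod) ∧
    (r = 1 → Irreducible f) :=
  statement0_general f n hprim m hmh r p k j hp hk hpdist hfm hj hcond1 hcond2
end

section
/- Let f = a_0 + a_1 z + ... + a_n z^n ∈ ℤ[z] with a_0·a_n ≠ 0. Suppose there exist a prime number p and a positive integer j ≤ n such that: (i) v_p(a_j) = 0; (ii) v_p(a_0)/j ≤ v_p(a_i)/(j − i) for each i = 0, 1, …, j − 1; and (iii) if j < n, then v_p(a_n)/(n − j) ≤ v_p(a_i)/(i − j) for each i = j+1, j+2, …, n−1. Let d_1 = gcd(v_p(a_0), j), and if j < n let d_2 = gcd(v_p(a_n), n − j). Define k_f = min{ j/d_1, (n − j)/d_2 } if j < n, and k_f = n/d_1 if j = n. Then every nonconstant irreducible factor of f in ℤ[z] has degree at least k_f. -/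
open Polynomial Finset

/-- weighted valuation of coefficient `i`. -/
private def nval (p s t : ℕ) (g : Polynomial ℤ) (i : ℕ) : ℕ :=
  s * padicValInt p (g.coeff i) + t * i

/-- `a` is the largest index attaining the minimum of `nval` on the support of `g`. -/
private def IsLastMin (p s t : ℕ) (g : Polynomial ℤ) (a : ℕ) : Prop :=
  g.coeff a ≠ 0 ∧ (∀ i, g.coeff i ≠ 0 → nval p s t g a ≤ nval p s t g i) ∧
    ∀ i, g.coeff i ≠ 0 → a < i → nval p s t g a < nval p s t g i

private lemma exists_isLastMin (p s t : ℕ) {g : Polynomial ℤ} (hg : g ≠ 0) :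
    ∃ a, IsLastMin p s t g a := by
  have hs : g.support.Nonempty := nonempty_support_iff.2 hg
  obtain ⟨b, hb, hmin⟩ := g.support.exists_min_image (nval p s t g) hs
  have hSne : (g.support.filter (fun i => nval p s t g i = nval p s t g b)).Nonempty :=
    ⟨b, mem_filter.2 ⟨hb, rfl⟩⟩
  have hmem := mem_filter.1 (Finset.max'_mem _ hSne)
  refine ⟨Finset.max' _ hSne, mem_support_iff.1 hmem.1, ?_, ?_⟩
  · intro i hi
    rw [hmem.2]; exact hmin i (mem_support_iff.2 hi)
  · intro i hi hlt
    rw [hmem.2]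
    rcases lt_or_eq_of_le (hmin i (mem_support_iff.2 hi)) with hc | hc
    · exact hc
    · exfalso
      have hiS : i ∈ g.support.filter (fun k => nval p s t g k = nval p s t g b) :=
        mem_filter.2 ⟨mem_support_iff.2 hi, hc.symm⟩
      exact absurd (Finset.le_max' _ i hiS) (not_le.2 hlt)

private lemma isLastMin_unique {p s t : ℕ} {g : Polynomial ℤ} {a b : ℕ}
    (ha : IsLastMin p s t g a) (hb : IsLastMin p s t g b) : a = b := by
  by_contra hne
  rcases lt_or_gt_of_ne hne with hlt | hlt
  · exact absurd (hb.2.1 a ha.1) (not_le.2 (ha.2.2 b hb.1 hlt))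
  · exact absurd (ha.2.1 b hb.1) (not_le.2 (hb.2.2 a ha.1 hlt))

private lemma isLastMin_mul {p : ℕ} [hp : Fact p.Prime] {s t : ℕ} (hs : 0 < s)
    {g h : Polynomial ℤ} {a b : ℕ}
    (hg : IsLastMin p s t g a) (hh : IsLastMin p s t h b) :
    IsLastMin p s t (g * h) (a + b) ∧
      padicValInt p ((g * h).coeff (a + b)) =
        padicValInt p (g.coeff a) + padicValInt p (h.coeff b) := by
  obtain ⟨hga, hgmin, hgstrict⟩ := hg
  obtain ⟨hhb, hhmin, hhstrict⟩ := hh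
  -- every off-main term in the antidiagonal sum is divisible by p^(e+1)
  have hterm : ∀ x : ℕ × ℕ, x.1 + x.2 = a + b → x ≠ (a, b) →
      (p : ℤ) ^ (padicValInt p (g.coeff a) + padicValInt p (h.coeff b) + 1) ∣
        g.coeff x.1 * h.coeff x.2 := by
    intro x hx hxne
    rcases eq_or_ne (g.coeff x.1 * h.coeff x.2) 0 with h0 | h0
    · simp [h0]
    have h1 : g.coeff x.1 ≠ 0 := left_ne_zero_of_mul h0
    have h2 : h.coeff x.2 ≠ 0 := right_ne_zero_of_mul h0
    have hxa : x.1 ≠ a := by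
      intro hxa
      exact hxne (Prod.ext hxa (by omega))
    have hkey : padicValInt p (g.coeff a) + padicValInt p (h.coeff b) <
        padicValInt p (g.coeff x.1) + padicValInt p (h.coeff x.2) := by
      have hab : t * a + t * b = t * (a + b) := by ring
      have hx' : t * x.1 + t * x.2 = t * (a + b) := by rw [← Nat.mul_add, hx]
      have hmul : s * (padicValInt p (g.coeff a) + padicValInt p (h.coeff b)) <
          s * (padicValInt p (g.coeff x.1) + padicValInt p (h.coeff x.2)) := by
        rcases lt_or_gt_of_ne hxa with hlt | hgt
        · have hx2 : b < x.2 := by omega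
          have l1 := hgmin x.1 h1
          have l2 := hhstrict x.2 h2 hx2
          simp only [nval] at l1 l2
          linarith [l1, l2, hx', hab]
        · have l1 := hgstrict x.1 h1 hgt
          have l2 := hhmin x.2 h2
          simp only [nval] at l1 l2
          linarith [l1, l2, hx', hab]
      exact Nat.lt_of_mul_lt_mul_left hmul
    rw [padicValInt_dvd_iff]
    exact Or.inr (by rw [padicValInt.mul h1 h2]; omega)
  have hmain0 : g.coeff a * h.coeff b ≠ 0 := mul_ne_zero hga hhb
  have hvmain : padicValInt p (g.coeff a * h.coeff b) =
      padicValInt p (g.coeff a) + padicValInt p (h.coeff b) := padicValInt.mul hga hhb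
  have hab_mem : ((a, b) : ℕ × ℕ) ∈ antidiagonal (a + b) := mem_antidiagonal.2 rfl
  have hsplit : (g * h).coeff (a + b) = g.coeff a * h.coeff b +
      ∑ x ∈ (antidiagonal (a + b)).erase (a, b), g.coeff x.1 * h.coeff x.2 := by
    rw [coeff_mul, ← Finset.add_sum_erase _ _ hab_mem]
  have hrest : (p : ℤ) ^ (padicValInt p (g.coeff a) + padicValInt p (h.coeff b) + 1) ∣
      ∑ x ∈ (antidiagonal (a + b)).erase (a, b), g.coeff x.1 * h.coeff x.2 :=
    Finset.dvd_sum fun x hx =>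
      hterm x (mem_antidiagonal.1 (mem_of_mem_erase hx)) (ne_of_mem_erase hx)
  have hnotdvd_main :
      ¬ (p : ℤ) ^ (padicValInt p (g.coeff a) + padicValInt p (h.coeff b) + 1) ∣
        g.coeff a * h.coeff b := by
    rw [padicValInt_dvd_iff]
    rintro (hc | hc)
    · exact hmain0 hc
    · rw [hvmain] at hc; omega
  have hC0 : (g * h).coeff (a + b) ≠ 0 := by
    intro hC
    apply hnotdvd_main
    have hmainval : g.coeff a * h.coeff b =
        -∑ x ∈ (antidiagonal (a + b)).erase (a, b), g.coeff x.1 * h.coeff x.2 := by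
      rw [hC] at hsplit; linarith [hsplit]
    rw [hmainval]
    exact dvd_neg.2 hrest
  have hdvd_e_C : (p : ℤ) ^ (padicValInt p (g.coeff a) + padicValInt p (h.coeff b)) ∣
      (g * h).coeff (a + b) := by
    rw [hsplit]
    refine dvd_add ?_ (dvd_trans (pow_dvd_pow _ (Nat.le_succ _)) hrest)
    rw [pow_add]
    exact mul_dvd_mul (padicValInt_dvd _) (padicValInt_dvd _)
  have hnotdvd_C :
      ¬ (p : ℤ) ^ (padicValInt p (g.coeff a) + padicValInt p (h.coeff b) + 1) ∣
        (g * h).coeff (a + b) := by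
    intro hd
    apply hnotdvd_main
    have hmainval : g.coeff a * h.coeff b = (g * h).coeff (a + b) -
        ∑ x ∈ (antidiagonal (a + b)).erase (a, b), g.coeff x.1 * h.coeff x.2 := by
      rw [hsplit]; ring
    rw [hmainval]
    exact dvd_sub hd hrest
  have hvC : padicValInt p ((g * h).coeff (a + b)) =
      padicValInt p (g.coeff a) + padicValInt p (h.coeff b) := by
    rcases (padicValInt_dvd_iff _ _).1 hdvd_e_C with hc | hc
    · exact absurd hc hC0
    · by_contra hne
      exact hnotdvd_C ((padicValInt_dvd_iff _ _).2 (Or.inr (by omega)))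
  -- lower bound for every coefficient of the product
  have hlower : ∀ k, (g * h).coeff k ≠ 0 →
      nval p s t g a + nval p s t h b ≤ nval p s t (g * h) k ∧
        (a + b < k → nval p s t g a + nval p s t h b < nval p s t (g * h) k) := by
    intro k hk
    have hTne : ((antidiagonal k).filter
        (fun x => g.coeff x.1 * h.coeff x.2 ≠ 0)).Nonempty := by
      by_contra hTe
      apply hk
      rw [coeff_mul]
      apply Finset.sum_eq_zero
      intro x hx
      by_contra h0
      exact hTe ⟨x, mem_filter.2 ⟨hx, h0⟩⟩
    obtain ⟨x0, hx0T, hx0min⟩ := Finset.exists_min_image _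
      (fun x => padicValInt p (g.coeff x.1) + padicValInt p (h.coeff x.2)) hTne
    rw [mem_filter] at hx0T
    have hx01 : g.coeff x0.1 ≠ 0 := left_ne_zero_of_mul hx0T.2
    have hx02 : h.coeff x0.2 ≠ 0 := right_ne_zero_of_mul hx0T.2
    have hx0sum : x0.1 + x0.2 = k := mem_antidiagonal.1 hx0T.1
    have hm0dvd : (p : ℤ) ^ (padicValInt p (g.coeff x0.1) + padicValInt p (h.coeff x0.2)) ∣
        (g * h).coeff k := by
      rw [coeff_mul]
      refine Finset.dvd_sum fun x hx => ?_
      rcases eq_or_ne (g.coeff x.1 * h.coeff x.2) 0 with h0 | h0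
      · simp [h0]
      · rw [padicValInt_dvd_iff]
        refine Or.inr ?_
        rw [padicValInt.mul (left_ne_zero_of_mul h0) (right_ne_zero_of_mul h0)]
        exact hx0min x (mem_filter.2 ⟨hx, h0⟩)
    have hm0le : padicValInt p (g.coeff x0.1) + padicValInt p (h.coeff x0.2) ≤
        padicValInt p ((g * h).coeff k) := by
      rcases (padicValInt_dvd_iff _ _).1 hm0dvd with hc | hc
      · exact absurd hc hk
      · exact hc
    have hm0le' := Nat.mul_le_mul_left s hm0le
    have hxk : t * x0.1 + t * x0.2 = t * k := by rw [← Nat.mul_add, hx0sum]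
    have hga' := hgmin x0.1 hx01
    have hhb' := hhmin x0.2 hx02
    simp only [nval] at hga' hhb' ⊢
    constructor
    · linarith [hm0le', hga', hhb', hxk]
    · intro hklt
      rcases (by omega : a < x0.1 ∨ b < x0.2) with hc | hc
      · have hst := hgstrict x0.1 hx01 hc
        simp only [nval] at hst
        linarith [hm0le', hst, hhb', hxk]
      · have hst := hhstrict x0.2 hx02 hc
        simp only [nval] at hst
        linarith [hm0le', hst, hga', hxk]
  have hnv : nval p s t (g * h) (a + b) = nval p s t g a + nval p s t h b := by
    simp only [nval, hvC]; ring
  exact ⟨⟨hC0, fun i hi => hnv ▸ (hlower i hi).1, fun i hi hlt => hnv ▸ (hlower i hi).2 hlt⟩, hvC⟩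

private lemma div_gcd_le {A j α : ℕ} (hj : 0 < j) (hα : 0 < α) (hdvd : j ∣ A * α) :
    j / Nat.gcd A j ≤ α := by
  have hd : 0 < Nat.gcd A j := Nat.gcd_pos_of_pos_right _ hj
  obtain ⟨c, hc⟩ := hdvd
  have e1 : Nat.gcd A j * (A / Nat.gcd A j) = A := Nat.mul_div_cancel' (Nat.gcd_dvd_left A j)
  have e2 : Nat.gcd A j * (j / Nat.gcd A j) = j := Nat.mul_div_cancel' (Nat.gcd_dvd_right A j)
  have h1 : j / Nat.gcd A j ∣ α * (A / Nat.gcd A j) := by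
    refine ⟨c, Nat.eq_of_mul_eq_mul_left hd ?_⟩
    calc Nat.gcd A j * (α * (A / Nat.gcd A j))
        = (Nat.gcd A j * (A / Nat.gcd A j)) * α := by ring
      _ = A * α := by rw [e1]
      _ = j * c := hc
      _ = (Nat.gcd A j * (j / Nat.gcd A j)) * c := by rw [e2]
      _ = Nat.gcd A j * (j / Nat.gcd A j * c) := by ring
  have hcop : Nat.Coprime (j / Nat.gcd A j) (A / Nat.gcd A j) :=
    (Nat.coprime_div_gcd_div_gcd hd).symm
  exact Nat.le_of_dvd hα (hcop.dvd_of_dvd_mul_right h1)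

/-- Theorem 3 (lower bound on degrees of irreducible factors via Newton polygons):
let `f = a_0 + ⋯ + a_n z^n ∈ ℤ[z]` with `a_0 a_n ≠ 0`, `p` a prime and `1 ≤ j ≤ n`
with (i) `v_p(a_j) = 0`; (ii) `v_p(a_0)/j ≤ v_p(a_i)/(j-i)` for `i = 0, …, j-1`;
(iii) if `j < n` then `v_p(a_n)/(n-j) ≤ v_p(a_i)/(i-j)` for `i = j+1, …, n-1`
(with `v_p(0) = ∞`, so the inequality holds automatically when `a_i = 0`).
With `d_1 = gcd(v_p(a_0), j)`, `d_2 = gcd(v_p(a_n), n-j)`, and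
`k_f = min{j/d_1, (n-j)/d_2}` if `j < n`, `k_f = n/d_1` if `j = n`, every
nonconstant irreducible factor of `f` in `ℤ[z]` has degree at least `k_f`. -/
theorem statement2
    (f : Polynomial ℤ) (n : ℕ) (hdeg : f.natDegree = n)
    (ha : f.coeff 0 * f.coeff n ≠ 0)
    (p : ℕ) (hp : Nat.Prime p)
    (j : ℕ) (hj0 : 0 < j) (hjn : j ≤ n)
    (hcond1 : ¬ ((p : ℤ) ∣ f.coeff j))
    (hcond2 : ∀ i < j, f.coeff i = 0 ∨
      (padicValInt p (f.coeff 0) : ℚ) / (j : ℚ) ≤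
        (padicValInt p (f.coeff i) : ℚ) / ((j : ℚ) - (i : ℚ)))
    (hcond3 : j < n → ∀ i, j < i → i < n → f.coeff i = 0 ∨
      (padicValInt p (f.coeff n) : ℚ) / ((n : ℚ) - (j : ℚ)) ≤
        (padicValInt p (f.coeff i) : ℚ) / ((i : ℚ) - (j : ℚ)))
    (g : Polynomial ℤ) (hgdvd : g ∣ f) (hgnc : 0 < g.natDegree)
    (hgirr : Irreducible g) :
    (if j < n then
        min (j / Nat.gcd (padicValInt p (f.coeff 0)) j)
            ((n - j) / Nat.gcd (padicValInt p (f.coeff n)) (n - j))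
      else n / Nat.gcd (padicValInt p (f.coeff 0)) n) ≤ g.natDegree := by
  haveI : Fact p.Prime := ⟨hp⟩
  have ha0 : f.coeff 0 ≠ 0 := left_ne_zero_of_mul ha
  have han : f.coeff n ≠ 0 := right_ne_zero_of_mul ha
  have haj : f.coeff j ≠ 0 := fun hz => hcond1 (hz ▸ dvd_zero _)
  have hvaj : padicValInt p (f.coeff j) = 0 := padicValInt.eq_zero_of_not_dvd hcond1
  obtain ⟨h, hfgh⟩ := hgdvd
  have hf0 : f ≠ 0 := fun hz => ha0 (by rw [hz]; simp)
  have hg0 : g ≠ 0 := fun hz => hf0 (by rw [hfgh, hz, zero_mul])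
  have hh0 : h ≠ 0 := fun hz => hf0 (by rw [hfgh, hz, mul_zero])
  set A := padicValInt p (f.coeff 0) with hA
  set B := padicValInt p (f.coeff n) with hB
  -- trivial case A = 0
  by_cases hAz : A = 0
  · have h1 : j / Nat.gcd A j = 1 := by rw [hAz, Nat.gcd_zero_left, Nat.div_self hj0]
    split_ifs with hjltn
    · exact le_trans (le_trans (min_le_left _ _) h1.le) hgnc
    · have hjn' : j = n := by omega
      rw [← hjn', h1]; exact hgnc
  have hApos : 0 < A := Nat.pos_of_ne_zero hAz
  -- the Newton polygon data for f with weight (j, A)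
  have hlmf1 : IsLastMin p j A f j := by
    refine ⟨haj, ?_, ?_⟩
    · intro i hi
      simp only [nval, hvaj, Nat.mul_zero, Nat.zero_add]
      rcases lt_or_ge i j with hilt | hige
      · have hq := (hcond2 i hilt).resolve_left hi
        rw [div_le_div_iff₀ (by exact_mod_cast hj0) (by
          rw [sub_pos]; exact_mod_cast hilt)] at hq
        have hnat : A * (j - i) ≤ padicValInt p (f.coeff i) * j := by
          have hcast : ((A * (j - i) : ℕ) : ℚ) ≤ ((padicValInt p (f.coeff i) * j : ℕ) : ℚ) := by
            push_cast [Nat.cast_sub hilt.le]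
            linarith [hq]
          exact_mod_cast hcast
        have hsplit : A * (j - i) + A * i = A * j := by
          rw [← Nat.mul_add, Nat.sub_add_cancel hilt.le]
        linarith [hnat, hsplit, Nat.zero_le (j * padicValInt p (f.coeff i))]
      · have h1 : A * j ≤ A * i := Nat.mul_le_mul_left A hige
        linarith [h1, Nat.zero_le (j * padicValInt p (f.coeff i))]
    · intro i hi hlt
      simp only [nval, hvaj, Nat.mul_zero, Nat.zero_add]
      have h1 : A * (j + 1) ≤ A * i := Nat.mul_le_mul_left A hlt
      have h2 : A * j < A * (j + 1) := by
        have : A * (j + 1) = A * j + A := by ring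
        omega
      linarith [h1, h2, Nat.zero_le (j * padicValInt p (f.coeff i))]
  -- last-minimizers for g and h with weight (j, A)
  obtain ⟨a, hlmg⟩ := exists_isLastMin p j A hg0
  obtain ⟨b, hlmh⟩ := exists_isLastMin p j A hh0
  obtain ⟨hlmgh, hvgh⟩ := isLastMin_mul hj0 hlmg hlmh
  rw [← hfgh] at hlmgh hvgh
  have hab : a + b = j := (isLastMin_unique hlmgh hlmf1)
  have hvab : padicValInt p (g.coeff a) = 0 ∧ padicValInt p (h.coeff b) = 0 := by
    rw [hab, hvaj] at hvgh; omega
  -- constant coefficients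
  have hc0 : f.coeff 0 = g.coeff 0 * h.coeff 0 := by rw [hfgh, mul_coeff_zero]
  have hg00 : g.coeff 0 ≠ 0 := fun hz => ha0 (by rw [hc0, hz, zero_mul])
  have hh00 : h.coeff 0 ≠ 0 := fun hz => ha0 (by rw [hc0, hz, mul_zero])
  have hva0 : padicValInt p (g.coeff 0) + padicValInt p (h.coeff 0) = A := by
    rw [hA, hc0, padicValInt.mul hg00 hh00]
  have e1 : A * a ≤ j * padicValInt p (g.coeff 0) := by
    have := hlmg.2.1 0 hg00
    simp only [nval, hvab.1, Nat.mul_zero, Nat.zero_add, Nat.add_zero] at this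
    linarith [this]
  have e2 : A * b ≤ j * padicValInt p (h.coeff 0) := by
    have := hlmh.2.1 0 hh00
    simp only [nval, hvab.2, Nat.mul_zero, Nat.zero_add, Nat.add_zero] at this
    linarith [this]
  have e4 : A * a + A * b = A * j := by rw [← Nat.mul_add, hab]
  have e3 : j * padicValInt p (g.coeff 0) + j * padicValInt p (h.coeff 0) = j * A := by
    rw [← Nat.mul_add, hva0]
  have heq1 : A * a = j * padicValInt p (g.coeff 0) := by linarith [e1, e2, e3, e4]
  have hdvd1 : j ∣ A * a := ⟨padicValInt p (g.coeff 0), heq1⟩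
  have hale : a ≤ g.natDegree := le_natDegree_of_ne_zero hlmg.1
  have hble : b ≤ h.natDegree := le_natDegree_of_ne_zero hlmh.1
  have hdegs : g.natDegree + h.natDegree = n := by
    rw [← hdeg, hfgh, natDegree_mul hg0 hh0]
  split_ifs with hjltn
  · -- case j < n
    by_cases hBz : B = 0
    · have h1 : (n - j) / Nat.gcd B (n - j) = 1 := by
        rw [hBz, Nat.gcd_zero_left, Nat.div_self (by omega)]
      exact le_trans (le_trans (min_le_right _ _) h1.le) hgnc
    have hBpos : 0 < B := Nat.pos_of_ne_zero hBz
    have hnj : 0 < n - j := by omega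
    -- reverse polynomial data with weight (n - j, B)
    have hrevle : ∀ (q : Polynomial ℤ) (i : ℕ), q.reverse.coeff i ≠ 0 → i ≤ q.natDegree :=
      fun q i hi => le_trans (le_natDegree_of_ne_zero hi) q.reverse_natDegree_le
    have hrevco : ∀ i ≤ n, f.reverse.coeff i = f.coeff (n - i) := by
      intro i hi
      rw [coeff_reverse, hdeg, revAt_le hi]
    have hlmf2 : IsLastMin p (n - j) B f.reverse (n - j) := by
      have hconj : f.reverse.coeff (n - j) ≠ 0 := by
        rw [hrevco (n - j) (by omega), show n - (n - j) = j from by omega]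
        exact haj
      refine ⟨hconj, ?_, ?_⟩
      · intro i hi
        have hin : i ≤ n := by rw [← hdeg]; exact hrevle f i hi
        have hco := hrevco i hin
        simp only [nval, hrevco (n - j) (by omega), show n - (n - j) = j from by omega,
          hvaj, Nat.mul_zero, Nat.zero_add, hco]
        rcases lt_or_ge i (n - j) with hilt | hige
        · rcases eq_or_lt_of_le (Nat.zero_le i) with hi0 | hi0
          · rw [← hi0]
            simp only [Nat.sub_zero, Nat.mul_zero, Nat.add_zero, ← hB]
            linarith [Nat.mul_comm B (n - j)]
          · have hni1 : j < n - i := by omega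
            have hni2 : n - i < n := by omega
            have hfnz : f.coeff (n - i) ≠ 0 := by rw [← hco]; exact hi
            have hq := (hcond3 hjltn (n - i) hni1 hni2).resolve_left hfnz
            rw [div_le_div_iff₀ (by
              rw [sub_pos]; exact_mod_cast hjltn) (by
              rw [sub_pos]; exact_mod_cast hni1)] at hq
            have hnat : B * (n - i - j) ≤ padicValInt p (f.coeff (n - i)) * (n - j) := by
              have hcast : ((B * (n - i - j) : ℕ) : ℚ) ≤
                  ((padicValInt p (f.coeff (n - i)) * (n - j) : ℕ) : ℚ) := by
                push_cast [Nat.cast_sub hni1.le, Nat.cast_sub hjn, Nat.cast_sub hin]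
                push_cast [Nat.cast_sub hin, Nat.cast_sub hjn] at hq
                linarith [hq]
              exact_mod_cast hcast
            have hsplit : B * (n - i - j) + B * i = B * (n - j) := by
              rw [← Nat.mul_add, show n - i - j + i = n - j from by omega]
            linarith [hnat, hsplit,
              Nat.zero_le ((n - j) * padicValInt p (f.coeff (n - i)))]
        · have h1 : B * (n - j) ≤ B * i := Nat.mul_le_mul_left B hige
          linarith [h1, Nat.zero_le ((n - j) * padicValInt p (f.coeff (n - i)))]
      · intro i hi hlt
        have hin : i ≤ n := by rw [← hdeg]; exact hrevle f i hi
        simp only [nval, hrevco (n - j) (by omega), show n - (n - j) = j from by omega,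
          hvaj, Nat.mul_zero, Nat.zero_add]
        have h1 : B * (n - j + 1) ≤ B * i := Nat.mul_le_mul_left B hlt
        have h2 : B * (n - j) < B * (n - j + 1) := by
          have : B * (n - j + 1) = B * (n - j) + B := by ring
          omega
        linarith [h1, h2, Nat.zero_le ((n - j) * padicValInt p (f.reverse.coeff i))]
    have hrg0 : g.reverse ≠ 0 := fun hz => hg0 (reverse_eq_zero.1 hz)
    have hrh0 : h.reverse ≠ 0 := fun hz => hh0 (reverse_eq_zero.1 hz)
    obtain ⟨a', hlmg'⟩ := exists_isLastMin p (n - j) B hrg0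
    obtain ⟨b', hlmh'⟩ := exists_isLastMin p (n - j) B hrh0
    obtain ⟨hlmgh', hvgh'⟩ := isLastMin_mul hnj hlmg' hlmh'
    have hrevmul : f.reverse = g.reverse * h.reverse := by
      rw [hfgh]; exact reverse_mul_of_domain g h
    rw [← hrevmul] at hlmgh' hvgh'
    have hab' : a' + b' = n - j := isLastMin_unique hlmgh' hlmf2
    have hvab' : padicValInt p (g.reverse.coeff a') = 0 ∧
        padicValInt p (h.reverse.coeff b') = 0 := by
      have hz : padicValInt p (f.reverse.coeff (n - j)) = 0 := by
        rw [hrevco (n - j) (by omega), show n - (n - j) = j from by omega, hvaj]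
      rw [hab', hz] at hvgh'; omega
    -- leading coefficients
    have hcn : f.coeff n = g.leadingCoeff * h.leadingCoeff := by
      rw [show f.coeff n = f.leadingCoeff from by rw [← hdeg]; rfl, hfgh, leadingCoeff_mul]
    have hgl0 : g.leadingCoeff ≠ 0 := leadingCoeff_ne_zero.2 hg0
    have hhl0 : h.leadingCoeff ≠ 0 := leadingCoeff_ne_zero.2 hh0
    have hvan : padicValInt p g.leadingCoeff + padicValInt p h.leadingCoeff = B := by
      rw [hB, hcn, padicValInt.mul hgl0 hhl0]
    have f1 : B * a' ≤ (n - j) * padicValInt p g.leadingCoeff := by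
      have := hlmg'.2.1 0 (by rw [coeff_zero_reverse]; exact hgl0)
      simp only [nval, hvab'.1, coeff_zero_reverse, Nat.mul_zero, Nat.zero_add,
        Nat.add_zero] at this
      linarith [this]
    have f2 : B * b' ≤ (n - j) * padicValInt p h.leadingCoeff := by
      have := hlmh'.2.1 0 (by rw [coeff_zero_reverse]; exact hhl0)
      simp only [nval, hvab'.2, coeff_zero_reverse, Nat.mul_zero, Nat.zero_add,
        Nat.add_zero] at this
      linarith [this]
    have f4 : B * a' + B * b' = B * (n - j) := by rw [← Nat.mul_add, hab']
    have f3 : (n - j) * padicValInt p g.leadingCoeff +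
        (n - j) * padicValInt p h.leadingCoeff = (n - j) * B := by
      rw [← Nat.mul_add, hvan]
    have heq2 : B * a' = (n - j) * padicValInt p g.leadingCoeff := by
      linarith [f1, f2, f3, f4]
    have hdvd2 : (n - j) ∣ B * a' := ⟨padicValInt p g.leadingCoeff, heq2⟩
    -- squeeze : a' ≤ g.natDegree - a  etc
    have hsq : ∀ (q : Polynomial ℤ) (c c' : ℕ), IsLastMin p j A q c →
        padicValInt p (q.coeff c) = 0 → IsLastMin p (n - j) B q.reverse c' →
        padicValInt p (q.reverse.coeff c') = 0 →
        c + c' ≤ q.natDegree := by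
      intro q c c' hlm hv0 hlm' hv0'
      have hcle : c ≤ q.natDegree := le_natDegree_of_ne_zero hlm.1
      have hcoeq : q.reverse.coeff (q.natDegree - c) = q.coeff c := by
        rw [coeff_reverse, revAt_le (Nat.sub_le _ _),
          show q.natDegree - (q.natDegree - c) = c from by omega]
      have hne : q.reverse.coeff (q.natDegree - c) ≠ 0 := by rw [hcoeq]; exact hlm.1
      have hmin := hlm'.2.1 (q.natDegree - c) hne
      simp only [nval, hcoeq, hv0, hv0', Nat.mul_zero, Nat.zero_add] at hmin
      have := Nat.le_of_mul_le_mul_left hmin hBpos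
      omega
    have hsqg := hsq g a a' hlmg hvab.1 hlmg' hvab'.1
    have hsqh := hsq h b b' hlmh hvab.2 hlmh' hvab'.2
    have hmg : a + a' = g.natDegree := by omega
    rcases Nat.lt_or_ge 0 a with hapos | hage
    · exact le_trans (min_le_left _ _) (le_trans (div_gcd_le hj0 hapos hdvd1) (by omega))
    · have hapos' : 0 < a' := by omega
      exact le_trans (min_le_right _ _) (le_trans (div_gcd_le hnj hapos' hdvd2) (by omega))
  · -- case j = n
    have hjn' : j = n := by omega
    have hbh : b ≤ h.natDegree := hble
    have hamg : a = g.natDegree := by omega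
    have hapos : 0 < a := by omega
    have := div_gcd_le hj0 hapos hdvd1
    rw [← hjn']
    omega
end

section
/- Let g = s_0 + s_1 z + ... + s_n z^n ∈ ℤ[z] be a primitive polynomial of degree n with s_0·s_n ≠ 0 such that every complex zero of g lies in the region |z| > 1. Suppose |s_n| = p_1^{k_1}···p_r^{k_r}, where p_1,…,p_r are primes which are pairwise distinct if r ≥ 2 and k_1,…,k_r are positive integers. Suppose that for each i = 1,…,r there exists a positive integer j_i ≤ n such that: (i) v_{p_i}(s_{n−j_i}) = 0 and gcd(k_i, j_i) = 1; (ii) if j_i > 1, then k_i/j_i < v_{p_i}(s_{n−t})/(j_i − t) for each t = 1,…,j_i − 1; and (iii) |s_0|/q ≤ |s_n|, where q is the smallest prime divisor of |s_0|. Then g is a product of at most r irreducible polynomials in ℤ[z]; in particular, if r = 1, then g is irreducible in ℤ[z]. -/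
/-!
Write `g = ± g₁ ⋯ g_m` with irreducible `g_l`, nonconstant because `g` is primitive. All zeros
of `g_l` lie outside the unit disc, so `|lc g_l| < |g_l(0)|`. If some `|lc g_l| = 1`, then
`|g_l(0)| ≥ q` and, were there another factor, `|s₀| = ∏ |g_l(0)| > q ∏ |lc g_l| = q |s_n|`,
contradicting (iii); so `m = 1`. Otherwise each `lc g_l` is divisible by some `p_i`, and
Dumas's theorem shows that no `p_i` divides two of them: by (i) and (ii), the Newton polygon of
the reversed polynomial at `p_i` starts with the segment from `(0, k_i)` to `(j_i, 0)`, which has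
no interior lattice point because `gcd(k_i, j_i) = 1`, while the Newton polygon of a product is
assembled from the segments of the factors. Hence `m ≤ r`.
-/

open Polynomial Finset UniqueFactorizationMonoid

section PadicValInt

variable {p : ℕ} [Fact p.Prime]

theorem padicValInt_min_le_add {a b : ℤ} (hab : a + b ≠ 0) :
    min (padicValInt p a) (padicValInt p b) ≤ padicValInt p (a + b) := by
  have h := padicValRat.min_le_padicValRat_add (p := p) (q := a) (r := b) (by exact_mod_cast hab)
  rw [← Int.cast_add] at h
  simp only [padicValRat.of_int] at h
  exact_mod_cast h

theorem Monotone.padicValInt_sum {ι : Type*} {Q : ℕ → Prop} (hQ : Monotone Q) (s : Finset ι)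
    (f : ι → ℤ) (hf : ∀ i ∈ s, f i ≠ 0 → Q (padicValInt p (f i)))
    (hs : ∑ i ∈ s, f i ≠ 0) : Q (padicValInt p (∑ i ∈ s, f i)) := by
  classical
  induction s using Finset.induction_on with
  | empty => simp at hs
  | insert a s ha ih =>
    rw [sum_insert ha] at hs ⊢
    by_cases hfa : f a = 0
    · rw [hfa, zero_add] at hs ⊢
      exact ih (fun i hi => hf i (mem_insert_of_mem hi)) hs
    by_cases hsum : ∑ i ∈ s, f i = 0
    · rw [hsum, add_zero]
      exact hf a (mem_insert_self a s) hfa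
    refine hQ (padicValInt_min_le_add hs) ?_
    rcases min_choice (padicValInt p (f a)) (padicValInt p (∑ i ∈ s, f i)) with h | h <;> rw [h]
    · exact hf a (mem_insert_self a s) hfa
    · exact ih (fun i hi => hf i (mem_insert_of_mem hi)) hsum

theorem padicValInt_add_eq_of_lt {a b : ℤ} (ha : a ≠ 0)
    (hb : b = 0 ∨ padicValInt p a < padicValInt p b) :
    a + b ≠ 0 ∧ padicValInt p (a + b) = padicValInt p a := by
  rcases hb with rfl | hb
  · simpa using ha
  have hb0 : b ≠ 0 := by rintro rfl; simp at hb
  have hab : a + b ≠ 0 := by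
    intro h
    rw [eq_neg_of_add_eq_zero_right h] at hb
    simp [padicValInt] at hb
  have h := padicValRat.add_eq_of_lt (p := p) (q := a) (r := b) (by exact_mod_cast hab)
    (by exact_mod_cast ha) (by exact_mod_cast hb0) (by simpa [padicValRat.of_int] using hb)
  rw [← Int.cast_add] at h
  simp only [padicValRat.of_int] at h
  exact ⟨hab, by exact_mod_cast h⟩

theorem Monotone.padicValInt_coeff_mul {Q : ℕ → Prop} (hQ : Monotone Q) {A B : ℤ[X]} {t : ℕ}
    (h : ∀ u v, u + v = t → A.coeff u * B.coeff v ≠ 0 →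
      Q (padicValInt p (A.coeff u * B.coeff v)))
    (ht : (A * B).coeff t ≠ 0) : Q (padicValInt p ((A * B).coeff t)) := by
  rw [coeff_mul] at ht ⊢
  exact hQ.padicValInt_sum _ _ (fun z hz => h z.1 z.2 (mem_antidiagonal.mp hz)) ht

end PadicValInt

namespace Multiset

theorem countP_le_one_of_not_and {M : Type*} [CommMonoid M] {P : M → Prop} [DecidablePred P]
    (hP : ∀ a b, a ∣ b → P a → P b) (c : M) (s : Multiset M)
    (h : ∀ a b, a * b = c * s.prod → ¬ (P a ∧ P b)) : s.countP P ≤ 1 := by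
  classical
  by_contra! h2
  obtain ⟨x, hx, hPx⟩ := countP_pos.mp (by omega : 0 < s.countP P)
  rw [← cons_erase hx, countP_cons_of_pos _ hPx] at h2
  obtain ⟨y, hy, hPy⟩ := countP_pos.mp (by omega : 0 < (s.erase x).countP P)
  refine h x (c * (s.erase x).prod) ?_ ⟨hPx, hP y _ (dvd_mul_of_dvd_right (dvd_prod hy) c) hPy⟩
  conv_rhs => rw [← cons_erase hx, prod_cons]
  exact mul_left_comm _ _ _

theorem card_le_sum_countP_s6 {α ι : Type*} (I : Finset ι) (P : ι → α → Prop)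
    [∀ i, DecidablePred (P i)] (s : Multiset α) (h : ∀ x ∈ s, ∃ i ∈ I, P i x) :
    card s ≤ ∑ i ∈ I, s.countP (P i) := by
  induction s using Multiset.induction_on with
  | empty => simp
  | cons x s ih =>
    obtain ⟨i, hi, hPi⟩ := h x (mem_cons_self x s)
    have hs := ih fun y hy => h y (mem_cons_of_mem hy)
    have hx : 1 ≤ ∑ i ∈ I, if P i x then 1 else 0 :=
      le_trans (by simp [hPi]) (Finset.single_le_sum (fun _ _ => Nat.zero_le _) hi)
    simp only [countP_cons, sum_add_distrib, card_cons]
    omega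

theorem eq_singleton_of_prod_map_le {ι : Type*} {s : Multiset ι} {a c : ι → ℕ} {q : ℕ}
    (hq : 0 < q) (ha : ∀ i ∈ s, 0 < a i) (hac : ∀ i ∈ s, a i < c i)
    (hprod : (s.map c).prod ≤ q * (s.map a).prod) {i₀ : ι} (hi₀ : i₀ ∈ s) (hai₀ : a i₀ = 1)
    (hci₀ : q ≤ c i₀) : s = {i₀} := by
  obtain ⟨t, rfl⟩ := exists_cons_of_mem hi₀
  suffices t = 0 by rw [this, cons_zero]
  by_contra ht
  have hlt := prod_map_lt_prod_map ht a c (fun i hi => ha i (mem_cons_of_mem hi))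
    fun i hi => hac i (mem_cons_of_mem hi)
  rw [map_cons, prod_cons, map_cons, prod_cons, hai₀, one_mul] at hprod
  have := (Nat.mul_lt_mul_left hq).mpr hlt
  have := Nat.mul_le_mul_right (t.map c).prod hci₀
  omega

end Multiset

theorem padicValNat_prod_pow_of_injOn {ι : Type*} {I : Finset ι} {p k : ι → ℕ}
    (hp : ∀ i ∈ I, (p i).Prime) (hinj : Set.InjOn p I) {i : ι} (hi : i ∈ I) :
    padicValNat (p i) (∏ i' ∈ I, p i' ^ k i') = k i := by
  classical
  have := Fact.mk (hp i hi)
  have hrest : ¬ p i ∣ ∏ i' ∈ I.erase i, p i' ^ k i' := by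
    intro hdvd
    obtain ⟨i', hi', hdvd'⟩ := (hp i hi).prime.exists_mem_finset_dvd hdvd
    obtain ⟨hne, hi'I⟩ := mem_erase.mp hi'
    have := (Nat.prime_dvd_prime_iff_eq (hp i hi) (hp i' hi'I)).mp ((hp i hi).dvd_of_dvd_pow hdvd')
    exact hne (hinj hi'I hi this.symm)
  rw [← mul_prod_erase I _ hi, padicValNat.mul (pow_ne_zero _ (hp i hi).ne_zero)
    fun h0 => hrest (by rw [h0]; exact dvd_zero _), padicValNat.prime_pow,
    padicValNat.eq_zero_of_not_dvd hrest, add_zero]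

theorem exists_dvd_of_dvd_prod_pow {ι : Type*} {I : Finset ι} {p k : ι → ℕ}
    (hp : ∀ i ∈ I, (p i).Prime) {m : ℕ} (hm : m ∣ ∏ i ∈ I, p i ^ k i) (h1 : m ≠ 1) :
    ∃ i ∈ I, p i ∣ m := by
  obtain ⟨q, hq, hqm⟩ := Nat.exists_prime_and_dvd h1
  obtain ⟨i, hi, hqi⟩ := hq.prime.exists_mem_finset_dvd (hqm.trans hm)
  refine ⟨i, hi, ?_⟩
  rwa [← (Nat.prime_dvd_prime_iff_eq hq (hp i hi)).mp (hq.dvd_of_dvd_pow hqi)]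

theorem Nat.mul_sub_lt_mul_of_div_lt_div {k j t v : ℕ} (ht : t < j)
    (h : (k : ℚ) / j < v / ((j : ℚ) - t)) : k * (j - t) < j * v := by
  have htj : (t : ℚ) < j := by exact_mod_cast ht
  rw [div_lt_div_iff₀ (by linarith [(t.cast_nonneg : (0 : ℚ) ≤ t)]) (by linarith)] at h
  have : ((k * (j - t) : ℕ) : ℚ) < ((j * v : ℕ) : ℚ) := by
    push_cast [Nat.cast_sub ht.le]
    linarith
  exact_mod_cast this

namespace Polynomial

variable (p j k : ℕ)

/-- The points `(u, v_p(P_u))` at which this weight is minimal over the support of `P` form the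
face of slope `-k/j` of the Newton polygon of `P`. -/
def newtonWeight (P : ℤ[X]) (u : ℕ) : ℕ := j * padicValInt p (P.coeff u) + k * u

/-- `x` is the right end of the face of slope `-k/j` of the Newton polygon of `P`. -/
def IsNewtonFaceEnd (P : ℤ[X]) (x : ℕ) : Prop :=
  P.coeff x ≠ 0 ∧ ∀ u, P.coeff u ≠ 0 →
    newtonWeight p j k P x ≤ newtonWeight p j k P u ∧
      (x < u → newtonWeight p j k P x < newtonWeight p j k P u)

variable {p j k}

theorem exists_isNewtonFaceEnd {P : ℤ[X]} (hP : P ≠ 0) : ∃ x, IsNewtonFaceEnd p j k P x := by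
  classical
  have hne : P.support.Nonempty := support_nonempty.mpr hP
  set w := newtonWeight p j k P
  set S := P.support.filter (fun u => w u = P.support.inf' hne w)
  have hS : S.Nonempty := by
    obtain ⟨x, hx, hxm⟩ := exists_mem_eq_inf' hne w
    exact ⟨x, mem_filter.mpr ⟨hx, hxm.symm⟩⟩
  obtain ⟨hsupp, hmin⟩ := mem_filter.mp (S.max'_mem hS)
  refine ⟨S.max' hS, mem_support_iff.mp hsupp, fun u hu => ?_⟩
  have hle := inf'_le w (mem_support_iff.mpr hu)
  change w _ ≤ w u ∧ (_ → w _ < w u)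
  rw [hmin]
  refine ⟨hle, fun hlt => lt_of_le_of_ne hle fun h => ?_⟩
  exact not_le.mpr hlt (S.le_max' u (mem_filter.mpr ⟨mem_support_iff.mpr hu, h.symm⟩))

theorem newtonWeight_add_newtonWeight [Fact p.Prime] {A B : ℤ[X]} {u v : ℕ}
    (h : A.coeff u * B.coeff v ≠ 0) :
    newtonWeight p j k A u + newtonWeight p j k B v =
      j * padicValInt p (A.coeff u * B.coeff v) + k * (u + v) := by
  rw [padicValInt.mul (left_ne_zero_of_mul h) (right_ne_zero_of_mul h), newtonWeight,
    newtonWeight]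
  ring

theorem IsNewtonFaceEnd.add_le_add {A B : ℤ[X]} {x y u v : ℕ}
    (hA : IsNewtonFaceEnd p j k A x) (hB : IsNewtonFaceEnd p j k B y)
    (hu : A.coeff u ≠ 0) (hv : B.coeff v ≠ 0) :
    newtonWeight p j k A x + newtonWeight p j k B y ≤
        newtonWeight p j k A u + newtonWeight p j k B v ∧
      (x < u ∨ y < v → newtonWeight p j k A x + newtonWeight p j k B y <
        newtonWeight p j k A u + newtonWeight p j k B v) := by
  obtain ⟨hAle, hAlt⟩ := hA.2 u hu
  obtain ⟨hBle, hBlt⟩ := hB.2 v hv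
  refine ⟨by omega, ?_⟩
  rintro (hxu | hyv)
  · have := hAlt hxu; omega
  · have := hBlt hyv; omega

theorem IsNewtonFaceEnd.mul [Fact p.Prime] {A B : ℤ[X]} {x y : ℕ}
    (hA : IsNewtonFaceEnd p j k A x) (hB : IsNewtonFaceEnd p j k B y) :
    IsNewtonFaceEnd p j k (A * B) (x + y) ∧
      newtonWeight p j k (A * B) (x + y) = newtonWeight p j k A x + newtonWeight p j k B y := by
  set M := newtonWeight p j k A x + newtonWeight p j k B y
  have hbound : ∀ u v, A.coeff u * B.coeff v ≠ 0 →
      M ≤ j * padicValInt p (A.coeff u * B.coeff v) + k * (u + v) ∧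
        (x < u ∨ y < v → M < j * padicValInt p (A.coeff u * B.coeff v) + k * (u + v)) :=
    fun u v h => by
      rw [← newtonWeight_add_newtonWeight h]
      exact hA.add_le_add hB (left_ne_zero_of_mul h) (right_ne_zero_of_mul h)
  have hmono : ∀ t, (Monotone fun e => M ≤ j * e + k * t) ∧ Monotone fun e => M < j * e + k * t :=
    fun t => ⟨fun a b hab h => h.trans (by gcongr), fun a b hab h => h.trans_le (by gcongr)⟩
  have hxy : A.coeff x * B.coeff y ≠ 0 := mul_ne_zero hA.1 hB.1
  set e₀ := padicValInt p (A.coeff x * B.coeff y)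
  set rest := ∑ z ∈ (antidiagonal (x + y)).erase (x, y), A.coeff z.1 * B.coeff z.2
  have hsplit : (A * B).coeff (x + y) = A.coeff x * B.coeff y + rest := by
    rw [coeff_mul, ← add_sum_erase _ (fun z => A.coeff z.1 * B.coeff z.2)
      (mem_antidiagonal.mpr rfl : (x, y) ∈ antidiagonal (x + y))]
  have hrest : rest = 0 ∨ e₀ < padicValInt p rest := by
    refine or_iff_not_imp_left.mpr (Monotone.padicValInt_sum (fun a b hab h => h.trans_le hab)
      _ _ fun z hz hz0 => ?_)
    obtain ⟨hne, hz⟩ := mem_erase.mp hz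
    have hzxy := mem_antidiagonal.mp hz
    have hlt := (hbound z.1 z.2 hz0).2 (by
      by_contra! h
      exact hne (Prod.ext (by omega) (by omega)))
    have hM : M = j * e₀ + k * (x + y) := newtonWeight_add_newtonWeight hxy
    rw [hzxy] at hlt
    exact Nat.lt_of_mul_lt_mul_left (a := j) (by omega)
  obtain ⟨hne, hval⟩ := padicValInt_add_eq_of_lt hxy hrest
  rw [← hsplit] at hne hval
  have hweight : newtonWeight p j k (A * B) (x + y) = M := by
    rw [newtonWeight, hval, ← newtonWeight_add_newtonWeight hxy]
  refine ⟨⟨hne, fun t ht => ⟨?_, fun hlt => ?_⟩⟩, hweight⟩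
  · rw [hweight, newtonWeight]
    exact (hmono t).1.padicValInt_coeff_mul
      (fun u v huv h => huv ▸ (hbound u v h).1) ht
  · rw [hweight, newtonWeight]
    exact (hmono t).2.padicValInt_coeff_mul
      (fun u v huv h => huv ▸ (hbound u v h).2 (by omega)) ht

theorem mul_le_newtonWeight {F : ℤ[X]} (h0 : padicValInt p (F.coeff 0) = k)
    (hlow : ∀ t, 0 < t → t < j → F.coeff t ≠ 0 → k * (j - t) < j * padicValInt p (F.coeff t))
    {t : ℕ} (ht : F.coeff t ≠ 0) : j * k ≤ newtonWeight p j k F t := by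
  rw [newtonWeight, mul_comm j k]
  rcases Nat.eq_zero_or_pos t with rfl | ht0
  · rw [h0, mul_comm j k]; omega
  rcases lt_or_ge t j with htj | htj
  · have := hlow t ht0 htj ht
    have : k * (j - t) + k * t = k * j := by rw [← mul_add, Nat.sub_add_cancel htj.le]
    omega
  · have := Nat.mul_le_mul_left k htj
    omega

theorem le_of_newtonWeight_eq_mul (hkj : k.Coprime j) (hj : 0 < j) {P : ℤ[X]} {z γ : ℕ}
    (h : newtonWeight p j k P z = j * γ) (hz : z ≠ 0) : k ≤ γ := by
  rw [newtonWeight] at h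
  have hjz : j ∣ z := hkj.symm.dvd_of_dvd_mul_left
    ((Nat.dvd_add_right (dvd_mul_right _ _)).mp (h ▸ dvd_mul_right j γ))
  have := Nat.mul_le_mul_left k (Nat.le_of_dvd (Nat.pos_of_ne_zero hz) hjz)
  refine Nat.le_of_mul_le_mul_left ?_ hj
  rw [mul_comm j k]
  omega

theorem not_dvd_coeff_zero_and_of_newton [Fact p.Prime] (hkj : k.Coprime j) (hj : 0 < j)
    {A B : ℤ[X]} (hA : A.coeff 0 ≠ 0) (hB : B.coeff 0 ≠ 0)
    (h0 : padicValInt p ((A * B).coeff 0) = k) (hpj : ¬ (p : ℤ) ∣ (A * B).coeff j)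
    (hlow : ∀ t, 0 < t → t < j → (A * B).coeff t ≠ 0 →
      k * (j - t) < j * padicValInt p ((A * B).coeff t)) :
    ¬ ((p : ℤ) ∣ A.coeff 0 ∧ (p : ℤ) ∣ B.coeff 0) := by
  rintro ⟨hpA, hpB⟩
  obtain ⟨x, hx⟩ := exists_isNewtonFaceEnd (p := p) (j := j) (k := k) (P := A)
    fun h => hA (by simp [h])
  obtain ⟨y, hy⟩ := exists_isNewtonFaceEnd (p := p) (j := j) (k := k) (P := B)
    fun h => hB (by simp [h])
  obtain ⟨hxy, hM⟩ := hx.mul hy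
  have hαβ : padicValInt p (A.coeff 0) + padicValInt p (B.coeff 0) = k := by
    rw [← padicValInt.mul hA hB, ← mul_coeff_zero, h0]
  have hα : 1 ≤ padicValInt p (A.coeff 0) :=
    ((padicValInt_dvd_iff 1 _).mp (by simpa using hpA)).resolve_left hA
  have hβ : 1 ≤ padicValInt p (B.coeff 0) :=
    ((padicValInt_dvd_iff 1 _).mp (by simpa using hpB)).resolve_left hB
  have hweight : newtonWeight p j k A x = j * padicValInt p (A.coeff 0) ∧
      newtonWeight p j k B y = j * padicValInt p (B.coeff 0) := by
    have hw0 : ∀ P : ℤ[X], newtonWeight p j k P 0 = j * padicValInt p (P.coeff 0) := by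
      simp [newtonWeight]
    have hAx := hw0 A ▸ (hx.2 0 hA).1
    have hBy := hw0 B ▸ (hy.2 0 hB).1
    have hsum := hM ▸ mul_le_newtonWeight h0 hlow hxy.1
    have hjk : j * k = j * padicValInt p (A.coeff 0) + j * padicValInt p (B.coeff 0) := by
      rw [← hαβ, mul_add]
    omega
  -- Otherwise the weight at the index `j`, which is `k j`, would be below the minimum.
  have hxy0 : x + y ≠ 0 := by
    intro h
    have hFj : (A * B).coeff j ≠ 0 := fun h' => hpj (h' ▸ dvd_zero _)
    have := (hxy.2 j hFj).2 (by omega)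
    rw [hM, hweight.1, hweight.2, newtonWeight, padicValInt.eq_zero_of_not_dvd hpj, ← mul_add,
      hαβ, mul_comm k j] at this
    omega
  rcases Nat.eq_zero_or_pos x with hx0 | hx0
  · have := le_of_newtonWeight_eq_mul hkj hj hweight.2 (by omega); omega
  · have := le_of_newtonWeight_eq_mul hkj hj hweight.1 hx0.ne'; omega

theorem not_dvd_leadingCoeff_and_of_newton [Fact p.Prime] {g a b : ℤ[X]} (hab : a * b = g)
    {n : ℕ} (hdeg : g.natDegree = n) (hj : 0 < j ∧ j ≤ n)
    (hk : padicValInt p g.leadingCoeff = k)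
    (hcond1 : ¬ (p : ℤ) ∣ g.coeff (n - j) ∧ Nat.gcd k j = 1)
    (hcond2 : 1 < j → ∀ t, 1 ≤ t → t ≤ j - 1 → g.coeff (n - t) = 0 ∨
      (k : ℚ) / j < (padicValInt p (g.coeff (n - t)) : ℚ) / ((j : ℚ) - t)) :
    ¬ ((p : ℤ) ∣ a.leadingCoeff ∧ (p : ℤ) ∣ b.leadingCoeff) := by
  subst hdeg
  have hg : g ≠ 0 := ne_zero_of_natDegree_gt (hj.1.trans_le hj.2)
  have hrev : a.reverse * b.reverse = g.reverse := hab ▸ (reverse_mul_of_domain a b).symm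
  have hcoeff : ∀ t ≤ g.natDegree, g.reverse.coeff t = g.coeff (g.natDegree - t) :=
    fun t ht => by rw [coeff_reverse, revAt_le ht]
  rw [← coeff_zero_reverse a, ← coeff_zero_reverse b]
  refine not_dvd_coeff_zero_and_of_newton hcond1.2 hj.1 ?_ ?_ ?_ ?_ fun t ht0 htj hne => ?_
  · exact coeff_zero_reverse a ▸ leadingCoeff_ne_zero.mpr (left_ne_zero_of_mul (hab ▸ hg))
  · exact coeff_zero_reverse b ▸ leadingCoeff_ne_zero.mpr (right_ne_zero_of_mul (hab ▸ hg))
  · rwa [hrev, coeff_zero_reverse]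
  · rw [hrev, hcoeff j hj.2]
    exact hcond1.1
  · rw [hrev, hcoeff t (by omega)] at hne ⊢
    exact Nat.mul_sub_lt_mul_of_div_lt_div htj
      ((hcond2 (by omega) t ht0 (by omega)).resolve_left hne)

theorem norm_leadingCoeff_lt_norm_coeff_zero {P : ℂ[X]} (hP : 0 < P.natDegree)
    (hroots : ∀ z, P.IsRoot z → 1 < ‖z‖) : ‖P.leadingCoeff‖ < ‖P.coeff 0‖ := by
  have hs := IsAlgClosed.splits P
  have hP0 : P ≠ 0 := ne_zero_of_natDegree_gt hP
  have hprod : 1 < (P.roots.map (‖·‖)).prod := by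
    have hne : P.roots ≠ 0 := by
      rw [← Multiset.card_pos, ← hs.natDegree_eq_card_roots]; exact hP
    simpa using Multiset.prod_map_lt_prod_map hne (fun _ => (1 : ℝ)) (‖·‖) (by simp)
      fun z hz => hroots z (isRoot_of_mem_roots hz)
  have hnorm : ‖P.roots.prod‖ = (P.roots.map (‖·‖)).prod :=
    map_multiset_prod (normHom : ℂ →*₀ ℝ) _
  rw [hs.coeff_zero_eq_leadingCoeff_mul_prod_roots, norm_mul, norm_mul, norm_pow, norm_neg,
    norm_one, one_pow, one_mul, hnorm]
  exact lt_mul_of_one_lt_right (norm_pos_iff.mpr (leadingCoeff_ne_zero.mpr hP0)) hprod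

theorem natAbs_leadingCoeff_lt_natAbs_coeff_zero {h : ℤ[X]} (hd : 0 < h.natDegree)
    (hroots : ∀ z : ℂ, aeval z h = 0 → 1 < ‖z‖) :
    h.leadingCoeff.natAbs < (h.coeff 0).natAbs := by
  have hinj : Function.Injective (Int.castRingHom ℂ) := (Int.castRingHom ℂ).injective_int
  have := norm_leadingCoeff_lt_norm_coeff_zero (P := h.map (Int.castRingHom ℂ))
    (by rwa [natDegree_map_eq_of_injective hinj])
    fun z hz => hroots z (by rwa [aeval_def, eval₂_eq_eval_map])
  rw [leadingCoeff_map_of_injective hinj, coeff_map] at this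
  rw [eq_intCast, eq_intCast, Complex.norm_intCast, Complex.norm_intCast, ← Int.cast_abs,
    ← Int.cast_abs, Int.cast_lt, Int.abs_eq_natAbs, Int.abs_eq_natAbs] at this
  exact_mod_cast this

theorem IsPrimitive.natDegree_pos_of_irreducible_of_dvd {R : Type*} [CommSemiring R]
    {g h : R[X]} (hg : g.IsPrimitive) (hh : Irreducible h) (hdvd : h ∣ g) : 0 < h.natDegree := by
  by_contra! h0
  rw [eq_C_of_natDegree_le_zero h0] at hh hdvd
  exact hh.not_isUnit (isUnit_C.mpr (hg _ hdvd))

theorem exists_eq_C_mul_prod_factors_s6 {g : ℤ[X]} (hg : g ≠ 0) :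
    ∃ u : ℤˣ, g = C (u : ℤ) * (factors g).prod := by
  obtain ⟨v, hv⟩ := factors_prod hg
  obtain ⟨c, hc, hcv⟩ := isUnit_iff.mp v.isUnit
  exact ⟨hc.unit, by conv_lhs => rw [← hv, ← hcv, mul_comm, ← hc.unit_spec]⟩

theorem natAbs_C_mul_prod {f : ℤ[X] →* ℤ} (hf : ∀ c, f (C c) = c) (u : ℤˣ)
    (gs : Multiset ℤ[X]) :
    (f (C (u : ℤ) * gs.prod)).natAbs = (gs.map fun h => (f h).natAbs).prod := by
  rw [map_mul, hf, Int.natAbs_mul, Int.isUnit_iff_natAbs_eq.mp u.isUnit, one_mul,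
    map_multiset_prod, ← Int.natAbsHom_apply, map_multiset_prod, Multiset.map_map]
  rfl

theorem eq_singleton_of_natAbs_leadingCoeff_eq_one {g : ℤ[X]} {u : ℤˣ} {gs : Multiset ℤ[X]}
    (hu : g = C (u : ℤ) * gs.prod) (hlt : ∀ h ∈ gs, h.leadingCoeff.natAbs < (h.coeff 0).natAbs)
    {q : ℕ} (hq : q.Prime) (hqmin : ∀ q', q'.Prime → q' ∣ (g.coeff 0).natAbs → q ≤ q')
    (hcond : (g.coeff 0).natAbs ≤ q * g.leadingCoeff.natAbs) {h₀ : ℤ[X]} (hh₀ : h₀ ∈ gs)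
    (h1 : h₀.leadingCoeff.natAbs = 1) : gs = {h₀} := by
  have hlc := natAbs_C_mul_prod (f := leadingCoeffHom) leadingCoeff_C u gs
  have hc0 := natAbs_C_mul_prod (f := constantCoeff.toMonoidHom) (fun _ => coeff_C_zero) u gs
  simp only [leadingCoeffHom_apply, RingHom.toMonoidHom_eq_coe, MonoidHom.coe_coe,
    constantCoeff_apply, ← hu] at hlc hc0
  refine Multiset.eq_singleton_of_prod_map_le hq.pos (fun h hh => ?_) hlt (hlc ▸ hc0 ▸ hcond)
    hh₀ h1 ?_
  · exact Int.natAbs_pos.mpr (leadingCoeff_ne_zero.mpr (by rintro rfl; simpa using hlt 0 hh))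
  have h2 : 1 < (h₀.coeff 0).natAbs := h1 ▸ hlt h₀ hh₀
  have hdvd : (h₀.coeff 0).natAbs ∣ (g.coeff 0).natAbs :=
    hc0 ▸ Multiset.dvd_prod (Multiset.mem_map_of_mem _ hh₀)
  exact (hqmin _ (Nat.minFac_prime h2.ne') ((Nat.minFac_dvd _).trans hdvd)).trans
    (Nat.minFac_le (by omega))

theorem card_le_of_natAbs_leadingCoeff_ne_one {g : ℤ[X]} {u : ℤˣ} {gs : Multiset ℤ[X]}
    (hu : g = C (u : ℤ) * gs.prod) {ι : Type*} {I : Finset ι} {p k : ι → ℕ}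
    (hp : ∀ i ∈ I, (p i).Prime) (hlc : g.leadingCoeff.natAbs = ∏ i ∈ I, p i ^ k i)
    (hsplit : ∀ i ∈ I, ∀ a b, a * b = g →
      ¬ ((p i : ℤ) ∣ a.leadingCoeff ∧ (p i : ℤ) ∣ b.leadingCoeff))
    (hne : ∀ h ∈ gs, h.leadingCoeff.natAbs ≠ 1) : Multiset.card gs ≤ I.card := by
  classical
  have hcover : ∀ h ∈ gs, ∃ i ∈ I, (p i : ℤ) ∣ h.leadingCoeff := by
    intro h hh
    have hdvd : h.leadingCoeff ∣ g.leadingCoeff :=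
      _root_.map_dvd leadingCoeffHom (hu ▸ dvd_mul_of_dvd_right (Multiset.dvd_prod hh) _)
    obtain ⟨i, hi, hpi⟩ := exists_dvd_of_dvd_prod_pow hp (hlc ▸ Int.natAbs_dvd_natAbs.mpr hdvd)
      (hne h hh)
    exact ⟨i, hi, Int.natCast_dvd.mpr hpi⟩
  calc Multiset.card gs ≤ ∑ i ∈ I, gs.countP (fun h => (p i : ℤ) ∣ h.leadingCoeff) :=
        Multiset.card_le_sum_countP_s6 I _ gs hcover
    _ ≤ ∑ _i ∈ I, 1 := sum_le_sum fun i hi =>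
        Multiset.countP_le_one_of_not_and
          (fun a b hab ha => ha.trans (_root_.map_dvd leadingCoeffHom hab)) (C (u : ℤ)) gs
          fun a b hab => hsplit i hi a b (hab.trans hu.symm)
    _ = I.card := by simp

theorem card_le_of_natAbs_leadingCoeff_eq_prod {g : ℤ[X]} {u : ℤˣ} {gs : Multiset ℤ[X]}
    (hu : g = C (u : ℤ) * gs.prod) (hlt : ∀ h ∈ gs, h.leadingCoeff.natAbs < (h.coeff 0).natAbs)
    {q : ℕ} (hq : q.Prime) (hqmin : ∀ q', q'.Prime → q' ∣ (g.coeff 0).natAbs → q ≤ q')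
    (hcond : (g.coeff 0).natAbs ≤ q * g.leadingCoeff.natAbs) {ι : Type*} {I : Finset ι}
    (hI : I.Nonempty) {p k : ι → ℕ} (hp : ∀ i ∈ I, (p i).Prime)
    (hlc : g.leadingCoeff.natAbs = ∏ i ∈ I, p i ^ k i)
    (hsplit : ∀ i ∈ I, ∀ a b, a * b = g →
      ¬ ((p i : ℤ) ∣ a.leadingCoeff ∧ (p i : ℤ) ∣ b.leadingCoeff)) :
    Multiset.card gs ≤ I.card := by
  by_cases h1 : ∃ h₀ ∈ gs, h₀.leadingCoeff.natAbs = 1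
  · obtain ⟨h₀, hh₀, h1⟩ := h1
    rw [eq_singleton_of_natAbs_leadingCoeff_eq_one hu hlt hq hqmin hcond hh₀ h1,
      Multiset.card_singleton]
    exact hI.card_pos
  · push Not at h1
    exact card_le_of_natAbs_leadingCoeff_ne_one hu hp hlc hsplit h1

end Polynomial

theorem irreducible_of_eq_mul_prod {M : Type*} [CommMonoid M] {g v : M} {gs : Multiset M}
    (hv : IsUnit v) (hg : g = v * gs.prod) (hirr : ∀ h ∈ gs, Irreducible h)
    (hcard : Multiset.card gs ≤ 1) (hgu : ¬ IsUnit g) : Irreducible g := by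
  rcases Nat.le_one_iff_eq_zero_or_eq_one.mp hcard with h0 | h1
  · rw [Multiset.card_eq_zero.mp h0, Multiset.prod_zero, mul_one] at hg
    exact absurd (hg ▸ hv) hgu
  · obtain ⟨h, rfl⟩ := Multiset.card_eq_one.mp h1
    rw [hg, Multiset.prod_singleton, irreducible_isUnit_mul hv]
    exact hirr h (Multiset.mem_singleton_self h)

theorem statement6_general
    (g : Polynomial ℤ) (n : ℕ) (hdeg : g.natDegree = n)
    (hprim : g.IsPrimitive)
    (hzeros : ∀ z : ℂ, Polynomial.aeval z g = 0 → 1 < ‖z‖)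
    (r : ℕ) (hr : 0 < r)
    (p k j : ℕ → ℕ)
    (hp : ∀ i < r, Nat.Prime (p i))
    (hpdist : ∀ i < r, ∀ i' < r, i ≠ i' → p i ≠ p i')
    (hsn : (g.coeff n).natAbs = ∏ i ∈ Finset.range r, p i ^ k i)
    (hj : ∀ i < r, 0 < j i ∧ j i ≤ n)
    (hcond1 : ∀ i < r,
      ¬ ((p i : ℤ) ∣ g.coeff (n - j i)) ∧ Nat.gcd (k i) (j i) = 1)
    (hcond2 : ∀ i < r, 1 < j i → ∀ t, 1 ≤ t → t ≤ j i - 1 →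
      g.coeff (n - t) = 0 ∨
      (k i : ℚ) / (j i : ℚ) <
        (padicValInt (p i) (g.coeff (n - t)) : ℚ) / ((j i : ℚ) - (t : ℚ)))
    (q : ℕ) (hq : Nat.Prime q)
    (hqmin : ∀ q', Nat.Prime q' → q' ∣ (g.coeff 0).natAbs → q ≤ q')
    (hcond3 : ((g.coeff 0).natAbs : ℚ) / (q : ℚ) ≤ ((g.coeff n).natAbs : ℚ)) :
    (∃ (N : ℕ) (u : ℤˣ) (gs : Multiset (Polynomial ℤ)),
      N ≤ r ∧ Multiset.card gs = N ∧
      (∀ h ∈ gs, 0 < h.natDegree ∧ Irreducible h) ∧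
      g = Polynomial.C (u : ℤ) * gs.prod) ∧
    (r = 1 → Irreducible g) := by
  have hn : 0 < n := (hj 0 hr).1.trans_le (hj 0 hr).2
  have hg : g ≠ 0 := ne_zero_of_natDegree_gt (hdeg ▸ hn)
  have hlead : g.leadingCoeff = g.coeff n := by rw [leadingCoeff, hdeg]
  obtain ⟨u, hu⟩ := exists_eq_C_mul_prod_factors_s6 hg
  have hpos : ∀ h ∈ factors g, 0 < h.natDegree := fun h hh =>
    hprim.natDegree_pos_of_irreducible_of_dvd (irreducible_of_factor h hh) (dvd_of_mem_factors hh)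
  have hlt : ∀ h ∈ factors g, h.leadingCoeff.natAbs < (h.coeff 0).natAbs := fun h hh =>
    natAbs_leadingCoeff_lt_natAbs_coeff_zero (hpos h hh) fun z hz => hzeros z (by
      obtain ⟨c, rfl⟩ := dvd_of_mem_factors hh; simp [hz])
  have hcond : (g.coeff 0).natAbs ≤ q * g.leadingCoeff.natAbs := by
    rw [div_le_iff₀ (by exact_mod_cast hq.pos)] at hcond3
    rw [hlead, mul_comm]; exact_mod_cast hcond3
  have hsplit : ∀ i ∈ range r, ∀ a b, a * b = g →
      ¬ ((p i : ℤ) ∣ a.leadingCoeff ∧ (p i : ℤ) ∣ b.leadingCoeff) := by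
    intro i hi a b hab
    rw [mem_range] at hi
    have := Fact.mk (hp i hi)
    refine not_dvd_leadingCoeff_and_of_newton hab hdeg (hj i hi) ?_ (hcond1 i hi) (hcond2 i hi)
    rw [padicValInt, hlead, hsn]
    exact padicValNat_prod_pow_of_injOn (fun i hi => hp i (mem_range.mp hi))
      (fun i hi i' hi' => not_imp_not.mp (hpdist i (mem_range.mp hi) i' (mem_range.mp hi')))
      (mem_range.mpr hi)
  have hcard : Multiset.card (factors g) ≤ r := by
    simpa using card_le_of_natAbs_leadingCoeff_eq_prod hu hlt hq hqmin hcond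
      (nonempty_range_iff.mpr hr.ne') (fun i hi => hp i (mem_range.mp hi)) (hlead ▸ hsn) hsplit
  refine ⟨⟨_, u, _, hcard, rfl, fun h hh => ⟨hpos h hh, irreducible_of_factor h hh⟩, hu⟩, ?_⟩
  rintro rfl
  exact irreducible_of_eq_mul_prod (isUnit_C.mpr u.isUnit) hu
    (fun h hh => irreducible_of_factor h hh) hcard
    fun hunit => by have := natDegree_eq_zero_of_isUnit hunit; omega

/-- Lemma 4: let `g = s_0 + s_1 z + ⋯ + s_n z^n ∈ ℤ[z]` be primitive of degree `n`
with `s_0 s_n ≠ 0`, all of whose complex zeros lie in the region `|z| > 1`. Suppose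
`|s_n| = p_1^{k_1} ⋯ p_r^{k_r}` for pairwise distinct primes `p_i`, and for each `i`
there is `1 ≤ j_i ≤ n` with (i) `v_{p_i}(s_{n-j_i}) = 0` and `gcd(k_i, j_i) = 1`;
(ii) if `j_i > 1`, `k_i/j_i < v_{p_i}(s_{n-t})/(j_i - t)` for `t = 1, …, j_i - 1`
(with `v_p(0) = ∞`); and (iii) `|s_0|/q ≤ |s_n|` where `q` is the smallest prime
divisor of `|s_0|`. Then `g` is a product of at most `r` irreducible polynomials in
`ℤ[z]`; in particular if `r = 1` then `g` is irreducible. -/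
theorem statement6
    (g : Polynomial ℤ) (n : ℕ) (hdeg : g.natDegree = n)
    (hs : g.coeff 0 * g.coeff n ≠ 0) (hprim : g.IsPrimitive)
    (hzeros : ∀ z : ℂ, Polynomial.aeval z g = 0 → 1 < ‖z‖)
    (r : ℕ) (hr : 0 < r)
    (p k j : ℕ → ℕ)
    (hp : ∀ i < r, Nat.Prime (p i))
    (hk : ∀ i < r, 0 < k i)
    (hpdist : ∀ i < r, ∀ i' < r, i ≠ i' → p i ≠ p i')
    (hsn : (g.coeff n).natAbs = ∏ i ∈ Finset.range r, p i ^ k i)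
    (hj : ∀ i < r, 0 < j i ∧ j i ≤ n)
    (hcond1 : ∀ i < r,
      ¬ ((p i : ℤ) ∣ g.coeff (n - j i)) ∧ Nat.gcd (k i) (j i) = 1)
    (hcond2 : ∀ i < r, 1 < j i → ∀ t, 1 ≤ t → t ≤ j i - 1 →
      g.coeff (n - t) = 0 ∨
      (k i : ℚ) / (j i : ℚ) <
        (padicValInt (p i) (g.coeff (n - t)) : ℚ) / ((j i : ℚ) - (t : ℚ)))
    (q : ℕ) (hq : Nat.Prime q) (hqdvd : q ∣ (g.coeff 0).natAbs)
    (hqmin : ∀ q', Nat.Prime q' → q' ∣ (g.coeff 0).natAbs → q ≤ q')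
    (hcond3 : ((g.coeff 0).natAbs : ℚ) / (q : ℚ) ≤ ((g.coeff n).natAbs : ℚ)) :
    (∃ (N : ℕ) (u : ℤˣ) (gs : Multiset (Polynomial ℤ)),
      N ≤ r ∧ Multiset.card gs = N ∧
      (∀ h ∈ gs, 0 < h.natDegree ∧ Irreducible h) ∧
      g = Polynomial.C (u : ℤ) * gs.prod) ∧
    (r = 1 → Irreducible g) :=
  statement6_general g n hdeg hprim hzeros r hr p k j hp hpdist hsn hj hcond1 hcond2 q hq hqmin
    hcond3
end
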